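/- arXiv:2605.16502 — 6 statements merged into one kernel-verified Lean document; each statement's English description precedes it below -/
import Mathlib

section
/- For all real numbers a > 0 and R > 0, Integral_{{h in R^2 : |h| <= R}} Integral_0^infty z / ((|h|^2 + (z-a)^2)(|h|^2 + (z+a)^2)) dz dh = (pi/a) Integral_0^R arctan(a/rho) d rho, and there exists an absolute constant C > 0 (independent of a and R) such that this quantity is at most C (1 + log_+(R/a)), where log_+ s := max{log s, 0}. -/
noncomputable section

open MeasureTheory Real Set Filter

/-- Euclidean plane. -/
abbrev E2 : Type := EuclideanSpace ℝ (Fin 2)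

section Aux

lemma inner_int (a ρ : ℝ) (ha : 0 < a) (hρ : 0 < ρ) :
    ∫ z in Ioi (0:ℝ), z / ((ρ^2 + (z-a)^2) * (ρ^2 + (z+a)^2)) ∂volume
      = Real.arctan (a/ρ) / (2*a*ρ) := by
  set F : ℝ → ℝ := fun z => (1/(4*a*ρ)) * (Real.arctan ((z-a)/ρ) - Real.arctan ((z+a)/ρ)) with hF
  have hρ0 : ρ ≠ 0 := hρ.ne'
  have hderiv : ∀ z ∈ Ici (0:ℝ), HasDerivAt F
      (z / ((ρ^2 + (z-a)^2) * (ρ^2 + (z+a)^2))) z := by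
    intro z _
    have h1 : HasDerivAt (fun z : ℝ => (z - a)/ρ) (1/ρ) z := by
      simpa using ((hasDerivAt_id z).sub_const a).div_const ρ
    have h2 : HasDerivAt (fun z : ℝ => (z + a)/ρ) (1/ρ) z := by
      simpa using ((hasDerivAt_id z).add_const a).div_const ρ
    have h1' := h1.arctan
    have h2' := h2.arctan
    have h := ((h1'.sub h2').const_mul (1/(4*a*ρ)))
    refine h.congr_deriv ?_
    have hA : ρ^2 + (z-a)^2 > 0 := by positivity
    have hB : ρ^2 + (z+a)^2 > 0 := by positivity
    have e1 : 1 + ((z-a)/ρ)^2 = (ρ^2 + (z-a)^2)/ρ^2 := by field_simp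
    have e2 : 1 + ((z+a)/ρ)^2 = (ρ^2 + (z+a)^2)/ρ^2 := by field_simp
    rw [e1, e2]
    field_simp
    ring
  have hpos : ∀ z ∈ Ioi (0:ℝ), 0 ≤ z / ((ρ^2 + (z-a)^2) * (ρ^2 + (z+a)^2)) := by
    intro z hz
    have hA : (0:ℝ) < ρ^2 + (z-a)^2 := by positivity
    have hB : (0:ℝ) < ρ^2 + (z+a)^2 := by positivity
    exact div_nonneg (le_of_lt hz) (by positivity)
  have htend : Tendsto F atTop (nhds 0) := by
    have t1 : Tendsto (fun z : ℝ => Real.arctan ((z - a)/ρ)) atTop (nhds (π/2)) := by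
      apply (Real.tendsto_arctan_atTop.mono_right nhdsWithin_le_nhds).comp
      apply Tendsto.atTop_div_const hρ
      exact tendsto_atTop_add_const_right _ _ tendsto_id
    have t2 : Tendsto (fun z : ℝ => Real.arctan ((z + a)/ρ)) atTop (nhds (π/2)) := by
      apply (Real.tendsto_arctan_atTop.mono_right nhdsWithin_le_nhds).comp
      apply Tendsto.atTop_div_const hρ
      exact tendsto_atTop_add_const_right _ _ tendsto_id
    have h3 := (t1.sub t2).const_mul (1/(4*a*ρ))
    rw [sub_self, mul_zero] at h3
    exact h3
  rw [MeasureTheory.integral_Ioi_of_hasDerivAt_of_nonneg' hderiv hpos htend]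
  simp only [hF]
  rw [zero_sub, zero_sub, neg_div, Real.arctan_neg]
  field_simp
  ring

lemma vol_unit_ball : (volume (Metric.ball (0:E2) 1)).toReal = π := by
  rw [EuclideanSpace.volume_ball]
  simp only [Fintype.card_fin]
  rw [show ((2:ℕ):ℝ)/2 + 1 = 2 by norm_num, Real.Gamma_two]
  rw [Real.sq_sqrt Real.pi_pos.le]
  simp [ENNReal.toReal_ofReal Real.pi_pos.le]

lemma radial (a R : ℝ) (ha : 0 < a) (hR : 0 < R) :
    ∫ h in Metric.closedBall (0:E2) R, Real.arctan (a/‖h‖) / (2*a*‖h‖) ∂volume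
      = π / a * ∫ ρ in (0:ℝ)..R, Real.arctan (a/ρ) := by
  set g : ℝ → ℝ := fun r => if r ≤ R then Real.arctan (a/r) / (2*a*r) else 0 with hg
  have step1 : ∫ h in Metric.closedBall (0:E2) R, Real.arctan (a/‖h‖) / (2*a*‖h‖) ∂volume
      = ∫ h : E2, g ‖h‖ ∂volume := by
    rw [← integral_indicator measurableSet_closedBall]
    congr 1
    funext x
    by_cases h : ‖x‖ ≤ R <;>
      simp [hg, indicator_apply, Metric.mem_closedBall, dist_zero_right, h]
  rw [step1, MeasureTheory.integral_fun_norm_addHaar volume g]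
  have hdim : Module.finrank ℝ E2 = 2 := finrank_euclideanSpace_fin
  rw [hdim]
  have step2 : ∫ y in Ioi (0:ℝ), y ^ (2-1) • g y
      = ∫ y in Ioi (0:ℝ), (Ioc (0:ℝ) R).indicator (fun y => (1/(2*a)) * Real.arctan (a/y)) y := by
    apply setIntegral_congr_fun measurableSet_Ioi
    intro y hy
    have hy0 : (0:ℝ) < y := hy
    simp only [hg, indicator_apply, mem_Ioc, pow_one, smul_eq_mul]
    by_cases h : y ≤ R
    · simp only [h, if_true, hy0, and_self, if_true]
      field_simp
      ring
    · simp [h, hy0]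
  rw [step2, setIntegral_indicator measurableSet_Ioc,
    inter_eq_self_of_subset_right (Ioc_subset_Ioi_self),
    ← intervalIntegral.integral_of_le hR.le,
    intervalIntegral.integral_const_mul, measureReal_def, vol_unit_ball]
  simp only [smul_eq_mul, nsmul_eq_mul, Nat.cast_ofNat]
  field_simp

lemma arctan_le_self' {x : ℝ} (hx : 0 ≤ x) : Real.arctan x ≤ x := by
  rcases eq_or_lt_of_le hx with rfl | hx'
  · simp
  · have h1 : 0 < Real.arctan x := by
      have := Real.arctan_strictMono hx'
      rwa [Real.arctan_zero] at this
    have h2 := Real.lt_tan h1 (Real.arctan_lt_pi_div_two x)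
    rw [Real.tan_arctan] at h2
    exact h2.le

lemma abs_arctan_le (t : ℝ) : |Real.arctan t| ≤ π/2 :=
  abs_le.2 ⟨(Real.neg_pi_div_two_lt_arctan t).le, (Real.arctan_lt_pi_div_two t).le⟩

lemma arctan_intble (a c d : ℝ) :
    IntervalIntegrable (fun ρ => Real.arctan (a/ρ)) volume c d := by
  rw [intervalIntegrable_iff]
  apply Measure.integrableOn_of_bounded (M := π/2) measure_Ioc_lt_top.ne
  · exact (Real.measurable_arctan.comp (measurable_const.div measurable_id)).aestronglyMeasurable
  · filter_upwards with x
    rw [Real.norm_eq_abs]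
    exact abs_arctan_le _

lemma bound_part (a R : ℝ) (ha : 0 < a) (hR : 0 < R) :
    π / a * (∫ ρ in (0:ℝ)..R, Real.arctan (a/ρ))
      ≤ π^2 * (1 + max (Real.log (R/a)) 0) := by
  have hmax : (0:ℝ) ≤ max (Real.log (R/a)) 0 := le_max_right _ _
  have hpi2 : (0:ℝ) < π^2 := by positivity
  rcases le_or_gt R a with hRa | hRa
  · have h1 : (∫ ρ in (0:ℝ)..R, Real.arctan (a/ρ)) ≤ ∫ _ in (0:ℝ)..R, π/2 := by
      apply intervalIntegral.integral_mono_on hR.le (arctan_intble a 0 R)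
        intervalIntegrable_const
      intro x _
      exact (Real.arctan_lt_pi_div_two _).le
    rw [intervalIntegral.integral_const, smul_eq_mul, sub_zero] at h1
    have h2 : π / a * (∫ ρ in (0:ℝ)..R, Real.arctan (a/ρ)) ≤ π / a * (R * (π/2)) := by
      apply mul_le_mul_of_nonneg_left h1 (by positivity)
    calc π / a * (∫ ρ in (0:ℝ)..R, Real.arctan (a/ρ)) ≤ π / a * (R * (π/2)) := h2
      _ ≤ π / a * (a * (π/2)) := by
          apply mul_le_mul_of_nonneg_left _ (by positivity)
          apply mul_le_mul_of_nonneg_right hRa (by positivity)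
      _ = π^2 / 2 := by field_simp
      _ ≤ π^2 * 1 := by linarith
      _ ≤ π^2 * (1 + max (Real.log (R/a)) 0) := by nlinarith
  · have hlog : Real.log (R/a) ≥ 0 :=
      Real.log_nonneg ((one_le_div ha).2 hRa.le)
    have hmaxeq : max (Real.log (R/a)) 0 = Real.log (R/a) := max_eq_left hlog
    have hsplit : (∫ ρ in (0:ℝ)..R, Real.arctan (a/ρ))
        = (∫ ρ in (0:ℝ)..a, Real.arctan (a/ρ)) + ∫ ρ in a..R, Real.arctan (a/ρ) :=
      (intervalIntegral.integral_add_adjacent_intervals (arctan_intble a 0 a)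
        (arctan_intble a a R)).symm
    have h1 : (∫ ρ in (0:ℝ)..a, Real.arctan (a/ρ)) ≤ a * (π/2) := by
      have := intervalIntegral.integral_mono_on ha.le (arctan_intble a 0 a)
        intervalIntegrable_const (fun x _ => (Real.arctan_lt_pi_div_two (a/x)).le)
      rwa [intervalIntegral.integral_const, smul_eq_mul, sub_zero] at this
    have hcont : ContinuousOn (fun ρ : ℝ => a/ρ) (Icc a R) := by
      apply ContinuousOn.div continuousOn_const continuousOn_id
      intro x hx; exact (lt_of_lt_of_le ha hx.1).ne'
    have h2 : (∫ ρ in a..R, Real.arctan (a/ρ)) ≤ ∫ ρ in a..R, a/ρ := by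
      apply intervalIntegral.integral_mono_on hRa.le (arctan_intble a a R)
        (hcont.intervalIntegrable_of_Icc hRa.le)
      intro x hx
      exact arctan_le_self' (div_nonneg ha.le (le_trans ha.le hx.1))
    have h3 : (∫ ρ in a..R, a/ρ) = a * Real.log (R/a) := by
      have : (∫ ρ in a..R, a/ρ) = a * ∫ ρ in a..R, 1/ρ := by
        rw [← intervalIntegral.integral_const_mul]
        congr 1; funext x; ring
      rw [this, integral_one_div]
      rw [Set.uIcc_of_le hRa.le]
      intro h0
      have := h0.1
      linarith
    have htot : (∫ ρ in (0:ℝ)..R, Real.arctan (a/ρ)) ≤ a * (π/2) + a * Real.log (R/a) := by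
      rw [hsplit]; exact add_le_add h1 (h2.trans h3.le)
    calc π / a * (∫ ρ in (0:ℝ)..R, Real.arctan (a/ρ))
        ≤ π / a * (a * (π/2) + a * Real.log (R/a)) :=
          mul_le_mul_of_nonneg_left htot (by positivity)
      _ = π^2/2 + π * Real.log (R/a) := by field_simp
      _ ≤ π^2 * (1 + Real.log (R/a)) := by
          have key : (0:ℝ) ≤ (π^2 - π) * Real.log (R/a) :=
            mul_nonneg (by nlinarith [Real.pi_gt_three]) hlog
          nlinarith [Real.pi_gt_three]
      _ = π^2 * (1 + max (Real.log (R/a)) 0) := by rw [hmaxeq]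

end Aux

/-- For all `a > 0` and `R > 0`,
`∫_{|h| ≤ R} ∫_0^∞ z / ((|h|² + (z-a)²)(|h|² + (z+a)²)) dz dh = (π/a) ∫_0^R arctan(a/ρ) dρ`,
and there is an absolute constant `C > 0` (independent of `a`, `R`) such that this quantity
is at most `C (1 + log₊(R/a))`, where `log₊ s = max (log s) 0`. -/
theorem log_integral_identity_and_bound :
    ∃ C : ℝ, 0 < C ∧ ∀ a R : ℝ, 0 < a → 0 < R →
      ((∫ h in Metric.closedBall (0 : E2) R,
          ∫ z in Ioi (0 : ℝ),
            z / ((‖h‖ ^ 2 + (z - a) ^ 2) * (‖h‖ ^ 2 + (z + a) ^ 2)) ∂volume ∂volume)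
        = (π / a) * ∫ ρ in (0 : ℝ)..R, Real.arctan (a / ρ))
      ∧ (π / a) * (∫ ρ in (0 : ℝ)..R, Real.arctan (a / ρ))
          ≤ C * (1 + max (Real.log (R / a)) 0) := by
  refine ⟨π^2, by positivity, fun a R ha hR => ⟨?_, bound_part a R ha hR⟩⟩
  have hcongr : (∫ h in Metric.closedBall (0 : E2) R,
      ∫ z in Ioi (0 : ℝ),
        z / ((‖h‖ ^ 2 + (z - a) ^ 2) * (‖h‖ ^ 2 + (z + a) ^ 2)) ∂volume ∂volume)
      = ∫ h in Metric.closedBall (0:E2) R, Real.arctan (a/‖h‖) / (2*a*‖h‖) ∂volume := by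
    apply setIntegral_congr_ae measurableSet_closedBall
    have h0 : (volume : Measure E2) ({0} : Set E2) = 0 := measure_singleton _
    have hae : ∀ᵐ h : E2, h ≠ 0 := by
      rw [ae_iff]
      simp [Set.setOf_eq_eq_singleton, h0]
    filter_upwards [hae] with h hh _
    exact inner_int a ‖h‖ ha (norm_pos_iff.2 hh)
  rw [hcongr]
  exact radial a R ha hR
end
end

section
/- Fix T_0 > 0, let K be a compact subset of R^N, and let Y^r : K x [0,T_0] -> R be continuous. Assume there exists a bounded function g : K x (0,T_0) -> R, measurable in t for each fixed x in K, such that Y^r(x,t) = Y^r(x,0) + Integral_0^t g(x,s) ds for every x in K and t in [0,T_0]. Assume furthermore there exist a full-measure set E_g subset of (0,T_0) and a function rho : [0,infty) -> [0,infty) with rho(s) -> 0 as s -> 0+ such that |g(x,t) - g(y,t)| <= rho(|x-y|) for all x,y in K and all t in E_g. Define R_K(t) := max_{x in K} Y^r(x,t), r_K(t) := min_{x in K} Y^r(x,t), M_K(t) := argmax_{x in K} Y^r(x,t), and A_K(t) := argmin_{x in K} Y^r(x,t). Then R_K and r_K are Lipschitz on [0,T_0], and there exists a full-measure set E subset of E_g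 such that for every t in E, R_K'(t) = max_{x in M_K(t)} g(x,t) and r_K'(t) = min_{x in A_K(t)} g(x,t); in particular these identities hold for almost every t in (0,T_0). -/
noncomputable section

open Real Set MeasureTheory Filter

private lemma lebesgue_pt_ae (f : ℝ → ℝ) (hf : Integrable f) :
    ∀ᵐ t : ℝ, Tendsto (fun r => ⨍ y in Metric.closedBall t r, |f y - f t|)
      (nhdsWithin 0 (Ioi 0)) (nhds 0) := by
  filter_upwards [IsUnifLocDoublingMeasure.ae_tendsto_average_norm_sub (μ := volume) hf.locallyIntegrable 1]
    with t ht
  have hmem : ∀ᶠ r in nhdsWithin (0:ℝ) (Ioi 0), t ∈ Metric.closedBall t (1 * r) := by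
    filter_upwards [self_mem_nhdsWithin] with r hr
    exact Metric.mem_closedBall_self (by nlinarith [mem_Ioi.1 hr])
  have := ht (fun _ : ℝ => t) (fun r => r) tendsto_id hmem
  simpa [Real.norm_eq_abs] using this

private lemma ftc_pt {f : ℝ → ℝ} (hf : Integrable f) {t : ℝ}
    (ht : Tendsto (fun r => ⨍ y in Metric.closedBall t r, |f y - f t|)
      (nhdsWithin 0 (Ioi 0)) (nhds 0))
    {ε : ℝ} (hε : 0 < ε) :
    ∀ᶠ u in nhds t, |∫ s in t..u, (f s - f t)| ≤ ε * |u - t| := by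
  have hev : ∀ᶠ r in nhdsWithin (0:ℝ) (Ioi 0),
      ⨍ y in Metric.closedBall t r, |f y - f t| < ε/2 :=
    ht.eventually_lt_const (by linarith)
  obtain ⟨δ, hδ, hδsub⟩ := mem_nhdsGT_iff_exists_Ioo_subset.1 hev
  filter_upwards [Metric.ball_mem_nhds t (show (0:ℝ) < δ from hδ)] with u hu
  rcases eq_or_ne u t with rfl | hne
  · simp
  have hr : 0 < |u - t| := abs_pos.2 (sub_ne_zero.2 hne)
  have hrδ : |u - t| < δ := by
    have := Metric.mem_ball.1 hu
    rwa [Real.dist_eq] at this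
  set r := |u - t| with hrdef
  have havg : ⨍ y in Metric.closedBall t r, |f y - f t| < ε/2 := hδsub ⟨hr, hrδ⟩
  have hint : IntegrableOn (fun s => |f s - f t|) (Metric.closedBall t r) volume := by
    apply Integrable.abs
    exact (hf.integrableOn.sub (integrableOn_const measure_closedBall_lt_top.ne))
  have h12 : |∫ s in t..u, (f s - f t)| ≤ ∫ s in Set.uIoc t u, |f s - f t| := by
    simpa [Real.norm_eq_abs] using
      intervalIntegral.norm_integral_le_integral_norm_uIoc
        (f := fun s => f s - f t) (a := t) (b := u) (μ := volume)
  have hsub : Set.uIoc t u ⊆ Metric.closedBall t r := by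
    intro s hs
    rw [Metric.mem_closedBall, Real.dist_eq]
    rcases le_total t u with h | h
    · rw [Set.uIoc_of_le h] at hs
      have : r = u - t := abs_of_nonneg (by linarith)
      rw [abs_le]; constructor <;> [linarith [hs.2, hs.1]; linarith [hs.1, hs.2]]
    · rw [Set.uIoc_of_ge h] at hs
      have : r = t - u := by rw [hrdef, abs_of_nonpos (by linarith : u - t ≤ 0)]; ring
      rw [abs_le]; constructor <;> [linarith [hs.1, hs.2]; linarith [hs.1, hs.2]]
  have h3 : ∫ s in Set.uIoc t u, |f s - f t| ≤ ∫ s in Metric.closedBall t r, |f s - f t| :=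
    setIntegral_mono_set hint (ae_of_all _ fun s => abs_nonneg _)
      (HasSubset.Subset.eventuallyLE hsub)
  have h4 : ∫ s in Metric.closedBall t r, |f s - f t|
      = (2*r) * ⨍ y in Metric.closedBall t r, |f y - f t| := by
    rw [setAverage_eq]
    have hv : (volume (Metric.closedBall t r)).toReal = 2*r := by
      rw [Real.volume_closedBall]
      exact ENNReal.toReal_ofReal (by linarith)
    rw [measureReal_def, hv, smul_eq_mul, ← mul_assoc, mul_inv_cancel₀ (by positivity), one_mul]
  calc |∫ s in t..u, (f s - f t)| ≤ ∫ s in Set.uIoc t u, |f s - f t| := h12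
    _ ≤ ∫ s in Metric.closedBall t r, |f s - f t| := h3
    _ = (2*r) * ⨍ y in Metric.closedBall t r, |f y - f t| := h4
    _ ≤ (2*r) * (ε/2) := by nlinarith [havg, hr]
    _ = ε * r := by ring

theorem danskin_auxX (N : ℕ) (T0 : ℝ) (hT0 : 0 < T0)
    (K : Set (EuclideanSpace ℝ (Fin N))) (hK : IsCompact K) (hKne : K.Nonempty)
    (Yr : EuclideanSpace ℝ (Fin N) → ℝ → ℝ)
    (hYc : ContinuousOn (fun p : EuclideanSpace ℝ (Fin N) × ℝ => Yr p.1 p.2)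
      (K ×ˢ Icc 0 T0))
    (g : EuclideanSpace ℝ (Fin N) → ℝ → ℝ) (M : ℝ)
    (hgbdd : ∀ x ∈ K, ∀ t ∈ Ioo (0 : ℝ) T0, |g x t| ≤ M)
    (hgmeas : ∀ x ∈ K, Measurable (g x))
    (hint : ∀ x ∈ K, ∀ t ∈ Icc (0 : ℝ) T0, Yr x t = Yr x 0 + ∫ s in (0 : ℝ)..t, g x s)
    (Eg : Set ℝ) (hEgsub : Eg ⊆ Ioo 0 T0) (hEgfull : volume (Ioo 0 T0 \ Eg) = 0)
    (ρ : ℝ → ℝ) (hρnn : ∀ s : ℝ, 0 ≤ s → 0 ≤ ρ s)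
    (hρ0 : Tendsto ρ (nhdsWithin 0 (Ioi 0)) (nhds 0))
    (hmod : ∀ x ∈ K, ∀ y ∈ K, ∀ t ∈ Eg, |g x t - g y t| ≤ ρ ‖x - y‖) :
    LipschitzOnWith (max M 0).toNNReal (fun t => sSup ((fun x => Yr x t) '' K)) (Icc 0 T0) ∧
    ∃ E : Set ℝ, E ⊆ Eg ∧ volume (Ioo 0 T0 \ E) = 0 ∧ ∀ t ∈ E,
      HasDerivAt (fun t => sSup ((fun x => Yr x t) '' K))
        (sSup ((fun x => g x t) ''
          {y ∈ K | Yr y t = sSup ((fun x => Yr x t) '' K)})) t := by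
  set RK : ℝ → ℝ := fun t => sSup ((fun x => Yr x t) '' K) with hRKdef
  set M' : ℝ := max M 0 with hM'def
  have hM'nn : 0 ≤ M' := le_max_right _ _
  -- continuity in x
  have hYcx : ∀ t ∈ Icc (0:ℝ) T0, ContinuousOn (fun x => Yr x t) K := by
    intro t ht
    exact hYc.comp (continuous_id.prodMk continuous_const).continuousOn
      (fun x hx => ⟨hx, ht⟩)
  have himg : ∀ t ∈ Icc (0:ℝ) T0, IsCompact ((fun x => Yr x t) '' K) := fun t ht =>
    hK.image_of_continuousOn (hYcx t ht)
  have hne : ∀ t : ℝ, ((fun x => Yr x t) '' K).Nonempty := fun t => hKne.image _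
  have hbdd : ∀ t ∈ Icc (0:ℝ) T0, BddAbove ((fun x => Yr x t) '' K) := fun t ht =>
    (himg t ht).bddAbove
  have hmax : ∀ t ∈ Icc (0:ℝ) T0, ∃ x ∈ K, Yr x t = RK t := by
    intro t ht
    obtain ⟨x, hx⟩ := (himg t ht).sSup_mem (hne t)
    exact ⟨x, hx.1, hx.2⟩
  -- a.e. of Eg within Ioo
  have haeEg : ∀ᵐ s : ℝ, s ∈ Ioo 0 T0 → s ∈ Eg := by
    rw [ae_iff]
    convert hEgfull using 2
    ext s; simp only [Set.mem_setOf_eq, Set.mem_diff, Classical.not_imp]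
  have haeT0 : ∀ᵐ s : ℝ, s ≠ T0 := by
    rw [ae_iff]
    simpa using measure_singleton (α := ℝ) T0
  -- membership in Ioo for uIoc
  have huIoc : ∀ a ∈ Icc (0:ℝ) T0, ∀ b ∈ Icc (0:ℝ) T0, ∀ s ∈ Set.uIoc a b,
      s ≠ T0 → s ∈ Ioo 0 T0 := by
    intro a ha b hb s hs hsT
    constructor
    · have : min a b < s := hs.1
      have : (0:ℝ) ≤ min a b := le_min ha.1 hb.1
      linarith [hs.1]
    · have : s ≤ max a b := hs.2
      have : max a b ≤ T0 := max_le ha.2 hb.2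
      have hle : s ≤ T0 := by linarith [hs.2]
      exact lt_of_le_of_ne hle hsT
  -- interval integrability
  have hgint : ∀ x ∈ K, ∀ a ∈ Icc (0:ℝ) T0, ∀ b ∈ Icc (0:ℝ) T0,
      IntervalIntegrable (g x) volume a b := by
    intro x hx a ha b hb
    rw [intervalIntegrable_iff]
    apply Integrable.mono'
      (show IntegrableOn (fun _ => M') (Set.uIoc a b) volume from
        integrableOn_const measure_Ioc_lt_top.ne)
      ((hgmeas x hx).aestronglyMeasurable.restrict)
    apply (ae_restrict_iff' measurableSet_uIoc).2
    filter_upwards [haeT0] with s hsT hs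
    rw [Real.norm_eq_abs]
    exact le_trans (hgbdd x hx s (huIoc a ha b hb s hs hsT)) (le_max_left _ _)
  -- norm bound for interval integrals
  have hgnorm : ∀ x ∈ K, ∀ a ∈ Icc (0:ℝ) T0, ∀ b ∈ Icc (0:ℝ) T0,
      |∫ s in a..b, g x s| ≤ M' * |b - a| := by
    intro x hx a ha b hb
    rw [← Real.norm_eq_abs]
    apply intervalIntegral.norm_integral_le_of_norm_le_const_ae
    filter_upwards [haeT0] with s hsT hs
    rw [Real.norm_eq_abs]
    exact le_trans (hgbdd x hx s (huIoc a ha b hb s hs hsT)) (le_max_left _ _)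
  -- difference formula
  have hYdiff : ∀ x ∈ K, ∀ a ∈ Icc (0:ℝ) T0, ∀ b ∈ Icc (0:ℝ) T0,
      Yr x b - Yr x a = ∫ s in a..b, g x s := by
    intro x hx a ha b hb
    rw [hint x hx a ha, hint x hx b hb]
    have := intervalIntegral.integral_interval_sub_left
      (hgint x hx 0 (left_mem_Icc.2 hT0.le) b hb) (hgint x hx 0 (left_mem_Icc.2 hT0.le) a ha)
    linarith [this]
  -- pointwise Lipschitz bound for Yr
  have hYlip : ∀ x ∈ K, ∀ a ∈ Icc (0:ℝ) T0, ∀ b ∈ Icc (0:ℝ) T0,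
      Yr x b ≤ Yr x a + M' * |b - a| := by
    intro x hx a ha b hb
    have h1 := hYdiff x hx a ha b hb
    have h2 := hgnorm x hx a ha b hb
    have h3 := (abs_le.1 h2).2
    linarith
  -- one-sided sup bound
  have hRKle : ∀ a ∈ Icc (0:ℝ) T0, ∀ b ∈ Icc (0:ℝ) T0, RK b ≤ RK a + M' * |b - a| := by
    intro a ha b hb
    apply csSup_le (hne b)
    rintro v ⟨x, hx, rfl⟩
    calc Yr x b ≤ Yr x a + M' * |b - a| := hYlip x hx a ha b hb
      _ ≤ RK a + M' * |b - a| := by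
          have : Yr x a ≤ RK a := le_csSup (hbdd a ha) ⟨x, hx, rfl⟩
          linarith
  -- Lipschitz
  have hRKlip : LipschitzOnWith M'.toNNReal RK (Icc 0 T0) := by
    apply LipschitzOnWith.of_dist_le_mul
    intro a ha b hb
    rw [Real.dist_eq, Real.dist_eq, Real.coe_toNNReal _ hM'nn]
    have h1 := hRKle a ha b hb
    have h2 := hRKle b hb a ha
    rw [abs_sub_comm b a] at h1
    rw [abs_le]
    constructor <;> [linarith; linarith]
  refine ⟨hRKlip, ?_⟩
  -- Lipschitz extension and Rademacher
  obtain ⟨F, hFlip, hFeq⟩ := hRKlip.extend_real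
  -- countable dense subset of K
  obtain ⟨D, hDK, hDcnt, hDdense⟩ := EMetric.subset_countable_closure_of_compact hK
  -- truncated integrands
  set G : EuclideanSpace ℝ (Fin N) → ℝ → ℝ := fun d => (Ioo 0 T0).indicator (g d) with hGdef
  have hGint : ∀ d ∈ K, Integrable (G d) := by
    intro d hd
    rw [hGdef]
    rw [integrable_indicator_iff measurableSet_Ioo]
    apply Integrable.mono'
      (show IntegrableOn (fun _ => M') (Ioo 0 T0) volume from
        integrableOn_const measure_Ioo_lt_top.ne)
      ((hgmeas d hd).aestronglyMeasurable.restrict)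
    apply (ae_restrict_iff' measurableSet_Ioo).2
    apply ae_of_all
    intro s hs
    rw [Real.norm_eq_abs]
    exact le_trans (hgbdd d hd s hs) (le_max_left _ _)
  set E : Set ℝ := Eg ∩ {t | DifferentiableAt ℝ F t} ∩
    ⋂ d ∈ D, {t | Tendsto (fun r => ⨍ y in Metric.closedBall t r, |G d y - G d t|)
      (nhdsWithin 0 (Ioi 0)) (nhds 0)} with hEdef
  have hEsub : E ⊆ Eg := fun t ht => ht.1.1
  have hEfull : volume (Ioo 0 T0 \ E) = 0 := by
    have h1 : volume {t : ℝ | ¬ DifferentiableAt ℝ F t} = 0 :=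
      ae_iff.1 (hFlip.ae_differentiableAt (μ := volume))
    have h2 : volume (⋃ d ∈ D, {t : ℝ | Tendsto (fun r => ⨍ y in Metric.closedBall t r,
        |G d y - G d t|) (nhdsWithin 0 (Ioi 0)) (nhds 0)}ᶜ) = 0 := by
      rw [measure_biUnion_null_iff hDcnt]
      intro d hd
      exact ae_iff.1 (lebesgue_pt_ae _ (hGint d (hDK hd)))
    apply measure_mono_null
      (show Ioo 0 T0 \ E ⊆ (Ioo 0 T0 \ Eg) ∪ {t : ℝ | ¬ DifferentiableAt ℝ F t} ∪
        ⋃ d ∈ D, {t : ℝ | Tendsto (fun r => ⨍ y in Metric.closedBall t r, |G d y - G d t|)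
          (nhdsWithin 0 (Ioi 0)) (nhds 0)}ᶜ from ?_)
    · exact measure_union_null (measure_union_null (hEgfull) h1) h2
    · intro t ht
      obtain ⟨htIoo, htE⟩ := ht
      rw [hEdef] at htE
      by_cases hEg' : t ∈ Eg
      · by_cases hF' : DifferentiableAt ℝ F t
        · right
          simp only [Set.mem_iUnion, Set.mem_compl_iff]
          by_contra hcon
          push_neg at hcon
          exact htE ⟨⟨hEg', hF'⟩, Set.mem_iInter₂.2 fun d hd => hcon d hd⟩
        · left; right; exact hF'
      · left; left; exact ⟨htIoo, hEg'⟩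
  refine ⟨E, hEsub, hEfull, ?_⟩
  intro t htE
  obtain ⟨⟨htEg, htF⟩, htA⟩ := htE
  have htIoo : t ∈ Ioo 0 T0 := hEgsub htEg
  have htIcc : t ∈ Icc (0:ℝ) T0 := Ioo_subset_Icc_self htIoo
  have hmemIoo : Ioo 0 T0 ∈ nhds t := isOpen_Ioo.mem_nhds htIoo
  have hRKF : RK =ᶠ[nhds t] F := by
    filter_upwards [hmemIoo] with u hu
    exact hFeq (Ioo_subset_Icc_self hu)
  set L : ℝ := deriv F t with hLdef
  have hRKd : HasDerivAt RK L t := (htF.hasDerivAt).congr_of_eventuallyEq hRKF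
  -- key: every x ∈ K gives a derivative of Yr x at t
  have key : ∀ x ∈ K, HasDerivAt (fun u => Yr x u) (g x t) t := by
    intro x hx
    rw [hasDerivAt_iff_isLittleO, Asymptotics.isLittleO_iff]
    intro c hc
    have hc3 : 0 < c/3 := by linarith
    obtain ⟨δ1, hδ1pos, hδ1⟩ : ∃ δ1 > (0:ℝ), ∀ s, 0 < s → s < δ1 → ρ s < c/3 := by
      obtain ⟨δ1, hδ1, hsub⟩ :=
        mem_nhdsGT_iff_exists_Ioo_subset.1 (hρ0.eventually_lt_const hc3)
      exact ⟨δ1, hδ1, fun s h1 h2 => hsub ⟨h1, h2⟩⟩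
    obtain ⟨d, hdD, hdx⟩ := Metric.mem_closure_iff.1 (hDdense hx) δ1 hδ1pos
    have hdK : d ∈ K := hDK hdD
    have hxd : ∀ s ∈ Eg, |g x s - g d s| ≤ c/3 := by
      intro s hs
      by_cases hxdeq : x = d
      · rw [hxdeq, sub_self, abs_zero]; linarith
      · have hpos : 0 < ‖x - d‖ := by
          rw [norm_pos_iff, sub_ne_zero]; exact hxdeq
        have hlt : ‖x - d‖ < δ1 := by rwa [← dist_eq_norm]
        exact le_of_lt (lt_of_le_of_lt (hmod x hx d hdK s hs) (hδ1 _ hpos hlt))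
    have htAd : Tendsto (fun r => ⨍ y in Metric.closedBall t r, |G d y - G d t|)
        (nhdsWithin 0 (Ioi 0)) (nhds 0) := Set.mem_iInter₂.1 htA d hdD
    have hftc := ftc_pt (hGint d hdK) htAd hc3
    filter_upwards [hmemIoo, hftc] with u hu hub
    have huIcc : u ∈ Icc (0:ℝ) T0 := Ioo_subset_Icc_self hu
    have hix : IntervalIntegrable (g x) volume t u := hgint x hx t htIcc u huIcc
    have hid : IntervalIntegrable (g d) volume t u := hgint d hdK t htIcc u huIcc
    have hiG : IntervalIntegrable (G d) volume t u := (hGint d hdK).intervalIntegrable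
    have huIcc_sub : Set.uIcc t u ⊆ Ioo 0 T0 :=
      (Set.ordConnected_Ioo).uIcc_subset htIoo hu
    have eqYr : Yr x u - Yr x t = ∫ s in t..u, g x s := hYdiff x hx t htIcc u huIcc
    have eq1 : ∫ s in t..u, g x s
        = (∫ s in t..u, (g x s - g d s)) + ∫ s in t..u, g d s := by
      rw [intervalIntegral.integral_sub hix hid]; ring
    have eq2 : ∫ s in t..u, g d s = ∫ s in t..u, G d s := by
      apply intervalIntegral.integral_congr
      intro s hs
      exact (Set.indicator_of_mem (huIcc_sub hs) _).symm
    have hGdt : G d t = g d t := Set.indicator_of_mem htIoo _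
    have eq3 : ∫ s in t..u, G d s
        = (∫ s in t..u, (G d s - G d t)) + (u - t) * g d t := by
      rw [intervalIntegral.integral_sub hiG intervalIntegrable_const,
        intervalIntegral.integral_const, hGdt, smul_eq_mul]
      ring
    have hA1 : |∫ s in t..u, (g x s - g d s)| ≤ c/3 * |u - t| := by
      rw [← Real.norm_eq_abs]
      apply intervalIntegral.norm_integral_le_of_norm_le_const_ae
      filter_upwards [haeEg, haeT0] with s hsEg hsT hs
      rw [Real.norm_eq_abs]
      exact hxd s (hsEg (huIoc t htIcc u huIcc s hs hsT))
    have hA3 : |g d t - g x t| ≤ c/3 := by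
      rw [abs_sub_comm]; exact hxd t htEg
    rw [Real.norm_eq_abs, Real.norm_eq_abs, smul_eq_mul]
    have expand : Yr x u - Yr x t - (u - t) * g x t
        = (∫ s in t..u, (g x s - g d s)) + (∫ s in t..u, (G d s - G d t))
          + (u - t) * (g d t - g x t) := by
      linear_combination eqYr + eq1 + eq2 + eq3
    rw [expand]
    calc |(∫ s in t..u, (g x s - g d s)) + (∫ s in t..u, (G d s - G d t))
          + (u - t) * (g d t - g x t)|
        ≤ |∫ s in t..u, (g x s - g d s)| + |∫ s in t..u, (G d s - G d t)|
          + |(u - t) * (g d t - g x t)| := abs_add_three _ _ _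
      _ ≤ c/3 * |u - t| + c/3 * |u - t| + |u - t| * (c/3) := by
          have h3 : |(u - t) * (g d t - g x t)| ≤ |u - t| * (c/3) := by
            rw [abs_mul]
            exact mul_le_mul_of_nonneg_left hA3 (abs_nonneg _)
          exact add_le_add (add_le_add hA1 hub) h3
      _ = c * |u - t| := by ring
  -- identify the derivative on the argmax set
  have hgL : ∀ x ∈ K, Yr x t = RK t → g x t = L := by
    intro x hx hxt
    have hslY : Tendsto (slope (Yr x) t) (nhdsWithin t {t}ᶜ) (nhds (g x t)) :=
      hasDerivAt_iff_tendsto_slope.1 (key x hx)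
    have hslR : Tendsto (slope RK t) (nhdsWithin t {t}ᶜ) (nhds L) :=
      hasDerivAt_iff_tendsto_slope.1 hRKd
    have hmono_gt : (Ioi t : Set ℝ) ⊆ {t}ᶜ := fun u hu =>
      Set.mem_compl_singleton_iff.2 (ne_of_gt hu)
    have hmono_lt : (Iio t : Set ℝ) ⊆ {t}ᶜ := fun u hu =>
      Set.mem_compl_singleton_iff.2 (ne_of_lt hu)
    have h1 : g x t ≤ L := by
      apply le_of_tendsto_of_tendsto
        (tendsto_nhdsWithin_mono_left hmono_gt hslY)
        (tendsto_nhdsWithin_mono_left hmono_gt hslR)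
      filter_upwards [self_mem_nhdsWithin, mem_nhdsWithin_of_mem_nhds hmemIoo] with u hu huIoo
      rw [slope_def_field, slope_def_field]
      have h0 : Yr x u ≤ RK u := le_csSup (hbdd u (Ioo_subset_Icc_self huIoo)) ⟨x, hx, rfl⟩
      have hnum : Yr x u - Yr x t ≤ RK u - RK t := by rw [hxt]; linarith
      exact (div_le_div_iff_of_pos_right (sub_pos.2 hu)).2 hnum
    have h2 : L ≤ g x t := by
      apply le_of_tendsto_of_tendsto
        (tendsto_nhdsWithin_mono_left hmono_lt hslR)
        (tendsto_nhdsWithin_mono_left hmono_lt hslY)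
      filter_upwards [self_mem_nhdsWithin, mem_nhdsWithin_of_mem_nhds hmemIoo] with u hu huIoo
      rw [slope_comm RK, slope_comm (Yr x), slope_def_field, slope_def_field]
      have h0 : Yr x u ≤ RK u := le_csSup (hbdd u (Ioo_subset_Icc_self huIoo)) ⟨x, hx, rfl⟩
      have hnum : RK t - RK u ≤ Yr x t - Yr x u := by rw [← hxt]; linarith
      exact (div_le_div_iff_of_pos_right (sub_pos.2 hu)).2 hnum
    exact le_antisymm h1 h2
  have himgL : (fun x => g x t) '' {y ∈ K | Yr y t = RK t} = {L} := by
    apply Set.Subset.antisymm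
    · rintro v ⟨y, ⟨hyK, hyt⟩, rfl⟩
      exact Set.mem_singleton_iff.2 (hgL y hyK hyt)
    · intro v hv
      rw [Set.mem_singleton_iff] at hv
      obtain ⟨x0, hx0K, hx0⟩ := hmax t htIcc
      exact ⟨x0, ⟨hx0K, hx0⟩, by rw [hv]; exact hgL x0 hx0K hx0⟩
  show HasDerivAt RK (sSup ((fun x => g x t) '' {y ∈ K | Yr y t = RK t})) t
  rw [himgL, csSup_singleton]
  exact hRKd


/-- Danskin-type lemma.  Fix `T₀ > 0`, let `K ⊆ ℝ^N` be compact
(nonempty), and let `Y^r : K × [0,T₀] → ℝ` be continuous.  Assume there is a bounded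
function `g`, measurable in `t`, with `Y^r(x,t) = Y^r(x,0) + ∫_0^t g(x,s) ds`, and a
full-measure set `E_g ⊆ (0,T₀)` together with a modulus of continuity `ρ` (with
`ρ(s) → 0` as `s → 0⁺`) such that `|g(x,t) - g(y,t)| ≤ ρ(|x-y|)` for `x,y ∈ K`, `t ∈ E_g`.
Define `R_K(t) = max_K Y^r(·,t)`, `r_K(t) = min_K Y^r(·,t)` and the argmax/argmin sets
`M_K(t)`, `A_K(t)`.  Then `R_K`, `r_K` are Lipschitz on `[0,T₀]`, and there is a
full-measure set `E ⊆ E_g` such that for every `t ∈ E`,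
`R_K'(t) = max_{M_K(t)} g(·,t)` and `r_K'(t) = min_{A_K(t)} g(·,t)`. -/
theorem danskin_type_envelope (N : ℕ) (T0 : ℝ) (hT0 : 0 < T0)
    (K : Set (EuclideanSpace ℝ (Fin N))) (hK : IsCompact K) (hKne : K.Nonempty)
    (Yr : EuclideanSpace ℝ (Fin N) → ℝ → ℝ)
    (hYc : ContinuousOn (fun p : EuclideanSpace ℝ (Fin N) × ℝ => Yr p.1 p.2)
      (K ×ˢ Icc 0 T0))
    (g : EuclideanSpace ℝ (Fin N) → ℝ → ℝ) (M : ℝ)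
    (hgbdd : ∀ x ∈ K, ∀ t ∈ Ioo (0 : ℝ) T0, |g x t| ≤ M)
    (hgmeas : ∀ x ∈ K, Measurable (g x))
    (hint : ∀ x ∈ K, ∀ t ∈ Icc (0 : ℝ) T0, Yr x t = Yr x 0 + ∫ s in (0 : ℝ)..t, g x s)
    (Eg : Set ℝ) (hEgsub : Eg ⊆ Ioo 0 T0) (hEgfull : volume (Ioo 0 T0 \ Eg) = 0)
    (ρ : ℝ → ℝ) (hρnn : ∀ s : ℝ, 0 ≤ s → 0 ≤ ρ s)
    (hρ0 : Tendsto ρ (nhdsWithin 0 (Ioi 0)) (nhds 0))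
    (hmod : ∀ x ∈ K, ∀ y ∈ K, ∀ t ∈ Eg, |g x t - g y t| ≤ ρ ‖x - y‖) :
    let RK : ℝ → ℝ := fun t => sSup ((fun x => Yr x t) '' K)
    let rK : ℝ → ℝ := fun t => sInf ((fun x => Yr x t) '' K)
    let MK : ℝ → Set (EuclideanSpace ℝ (Fin N)) := fun t => {y ∈ K | Yr y t = RK t}
    let AK : ℝ → Set (EuclideanSpace ℝ (Fin N)) := fun t => {y ∈ K | Yr y t = rK t}
    (∃ Lip : NNReal, LipschitzOnWith Lip RK (Icc 0 T0) ∧ LipschitzOnWith Lip rK (Icc 0 T0))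
    ∧ ∃ E : Set ℝ, E ⊆ Eg ∧ volume (Ioo 0 T0 \ E) = 0 ∧ ∀ t ∈ E,
        HasDerivAt RK (sSup ((fun x => g x t) '' MK t)) t ∧
        HasDerivAt rK (sInf ((fun x => g x t) '' AK t)) t := by
  intro RK rK MK AK
  -- first application : maxima
  obtain ⟨hlip1, E1, hE1sub, hE1full, hE1⟩ := danskin_auxX N T0 hT0 K hK hKne Yr hYc g M
    hgbdd hgmeas hint Eg hEgsub hEgfull ρ hρnn hρ0 hmod
  -- second application : minima, via negation
  have hYc' : ContinuousOn (fun p : EuclideanSpace ℝ (Fin N) × ℝ => -Yr p.1 p.2)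
      (K ×ˢ Icc 0 T0) := hYc.neg
  have hgbdd' : ∀ x ∈ K, ∀ t ∈ Ioo (0:ℝ) T0, |(-g x t)| ≤ M := by
    intro x hx t ht; rw [abs_neg]; exact hgbdd x hx t ht
  have hgmeas' : ∀ x ∈ K, Measurable (fun t => -g x t) := fun x hx => (hgmeas x hx).neg
  have hint' : ∀ x ∈ K, ∀ t ∈ Icc (0:ℝ) T0,
      -Yr x t = -Yr x 0 + ∫ s in (0:ℝ)..t, -g x s := by
    intro x hx t ht
    rw [intervalIntegral.integral_neg, hint x hx t ht]
    ring
  have hmod' : ∀ x ∈ K, ∀ y ∈ K, ∀ t ∈ Eg, |(-g x t) - (-g y t)| ≤ ρ ‖x - y‖ := by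
    intro x hx y hy t ht
    rw [show -g x t - -g y t = -(g x t - g y t) by ring, abs_neg]
    exact hmod x hx y hy t ht
  obtain ⟨hlip2, E2, hE2sub, hE2full, hE2⟩ := danskin_auxX N T0 hT0 K hK hKne
    (fun x t => -Yr x t) hYc' (fun x t => -g x t) M hgbdd' hgmeas' hint' Eg hEgsub hEgfull
    ρ hρnn hρ0 hmod'
  -- identify the negated sup with -rK
  have hsup_eq : ∀ t : ℝ, sSup ((fun x => -Yr x t) '' K) = -rK t := by
    intro t
    have himg : (fun x => -Yr x t) '' K = -((fun x => Yr x t) '' K) := by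
      rw [← Set.image_neg_eq_neg, ← Set.image_comp]
      rfl
    rw [himg]
    have := Real.sInf_def ((fun x => Yr x t) '' K)
    show sSup (-((fun x => Yr x t) '' K)) = -sInf ((fun x => Yr x t) '' K)
    rw [this]; ring
  have hfun_eq : (fun t => sSup ((fun x => -Yr x t) '' K)) = fun t => -rK t :=
    funext hsup_eq
  rw [hfun_eq] at hlip2 hE2
  constructor
  · refine ⟨(max M 0).toNNReal, hlip1, ?_⟩
    apply LipschitzOnWith.of_dist_le_mul
    intro a ha b hb
    have := hlip2.dist_le_mul a ha b hb
    rwa [Real.dist_eq, Real.dist_eq, neg_sub_neg, ← Real.dist_eq, ← Real.dist_eq,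
      dist_comm (rK b) (rK a)] at this
  · refine ⟨E1 ∩ E2, fun t ht => hE1sub ht.1, ?_, ?_⟩
    · apply measure_mono_null
        (show Ioo 0 T0 \ (E1 ∩ E2) ⊆ (Ioo 0 T0 \ E1) ∪ (Ioo 0 T0 \ E2) from ?_)
      · exact measure_union_null hE1full hE2full
      · intro t ht
        by_cases h1 : t ∈ E1
        · right; exact ⟨ht.1, fun h2 => ht.2 ⟨h1, h2⟩⟩
        · left; exact ⟨ht.1, h1⟩
    · intro t ht
      refine ⟨hE1 t ht.1, ?_⟩
      have h2 := hE2 t ht.2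
      -- rewrite the argmin set
      have hset : {y | y ∈ K ∧ -Yr y t = sSup ((fun x => -Yr x t) '' K)} = AK t := by
        ext y
        simp only [Set.mem_setOf_eq, hsup_eq t, neg_inj]
        rfl
      rw [hset] at h2
      -- rewrite the derivative value
      have hval : sSup ((fun x => -g x t) '' AK t) = -sInf ((fun x => g x t) '' AK t) := by
        have himg : (fun x => -g x t) '' AK t = -((fun x => g x t) '' AK t) := by
          rw [← Set.image_neg_eq_neg, ← Set.image_comp]
          rfl
        rw [himg]
        have := Real.sInf_def ((fun x => g x t) '' AK t)
        rw [this]; ring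
      rw [hval] at h2
      simpa [Pi.neg_def] using h2.neg
end
end

section
/- Let x_k : [0,infty) -> (0,infty), k = 1, 2, 3, ..., be differentiable functions satisfying for every k >= 1 and t >= 0 the triangular ODE system x_k'(t) = x_k(t) Sum_{j=1}^{k-1} x_j(t) Gamma_j(t)^2 (empty sum = 0 for k = 1), where Gamma_j(t) := (x_j(0)/x_j(t))^3. Set b_j(t) := x_j(t) Gamma_j(t)^2, S_k(t) := Sum_{j=1}^{k} b_j(t), and S_0(t) := 0. Then for every j >= 1 and t >= 0, b_j'(t) = -5 b_j(t) S_{j-1}(t), and consequently for every k >= 1 and t >= 0, S_k'(t) = -(5/2)( S_k(t)^2 - Sum_{j=1}^{k} b_j(t)^2 ). -/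
noncomputable section

open Real Set Finset

/-- The aspect ratio `Γ_j(t) = (x_j(0)/x_j(t))³`. -/
def Gam (x : ℕ → ℝ → ℝ) (j : ℕ) (t : ℝ) : ℝ := (x j 0 / x j t) ^ 3

/-- The individual stretching coefficient `b_j(t) = x_j(t) Γ_j(t)²`. -/
def bb (x : ℕ → ℝ → ℝ) (j : ℕ) (t : ℝ) : ℝ := x j t * Gam x j t ^ 2

/-- The cumulative stretching rate `S_k(t) = Σ_{j=1}^k b_j(t)` (so `S_0 = 0`). -/
def SS (x : ℕ → ℝ → ℝ) (k : ℕ) (t : ℝ) : ℝ := ∑ j ∈ Finset.Icc 1 k, bb x j t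

lemma telescope_aux (b : ℕ → ℝ) (k : ℕ) :
    2 * ∑ j ∈ Finset.Icc 1 k, b j * (∑ i ∈ Finset.Icc 1 (j - 1), b i)
      = (∑ j ∈ Finset.Icc 1 k, b j) ^ 2 - ∑ j ∈ Finset.Icc 1 k, (b j) ^ 2 := by
  induction k with
  | zero => simp
  | succ n ih =>
    have h1 : 1 ≤ n + 1 := Nat.succ_le_succ (Nat.zero_le n)
    rw [Finset.sum_Icc_succ_top h1, Finset.sum_Icc_succ_top h1,
      Finset.sum_Icc_succ_top h1]
    simp only [Nat.add_sub_cancel]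
    nlinarith [ih]

/-- Let `x_k : [0,∞) → (0,∞)`, `k = 1, 2, …`, be differentiable functions
satisfying the triangular ODE system `x_k'(t) = x_k(t) Σ_{j=1}^{k-1} x_j(t) Γ_j(t)²`
(empty sum for `k = 1`), where `Γ_j(t) = (x_j(0)/x_j(t))³`.  Set `b_j(t) = x_j(t) Γ_j(t)²`,
`S_k(t) = Σ_{j=1}^k b_j(t)`, `S_0 = 0`.  Then for every `j ≥ 1` and `t ≥ 0`,
`b_j'(t) = -5 b_j(t) S_{j-1}(t)`, and consequently for every `k ≥ 1` and `t ≥ 0`,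
`S_k'(t) = -(5/2)(S_k(t)² - Σ_{j=1}^k b_j(t)²)`. -/
theorem flattened_cascade_depletion_identities (x : ℕ → ℝ → ℝ)
    (hpos : ∀ k, 1 ≤ k → ∀ t : ℝ, 0 ≤ t → 0 < x k t)
    (hode : ∀ k, 1 ≤ k → ∀ t : ℝ, 0 ≤ t →
      HasDerivAt (x k) (x k t * ∑ j ∈ Finset.Icc 1 (k - 1), x j t * Gam x j t ^ 2) t) :
    (∀ j, 1 ≤ j → ∀ t : ℝ, 0 ≤ t →
        HasDerivAt (fun s => bb x j s) (-5 * bb x j t * SS x (j - 1) t) t)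
    ∧ (∀ k, 1 ≤ k → ∀ t : ℝ, 0 ≤ t →
        HasDerivAt (fun s => SS x k s)
          (-(5 / 2) * (SS x k t ^ 2 - ∑ j ∈ Finset.Icc 1 k, bb x j t ^ 2)) t) := by
  have heq : ∀ j s, bb x j s = (x j 0) ^ 6 * ((x j s)⁻¹) ^ 5 := by
    intro j s
    unfold bb Gam
    rcases eq_or_ne (x j s) 0 with h | h
    · simp [h]
    · field_simp
  have hSeq : ∀ m t, SS x m t = ∑ i ∈ Finset.Icc 1 m, x i t * Gam x i t ^ 2 := by
    intro m t; simp [SS, bb]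
  have part1 : ∀ j, 1 ≤ j → ∀ t : ℝ, 0 ≤ t →
      HasDerivAt (fun s => bb x j s) (-5 * bb x j t * SS x (j - 1) t) t := by
    intro j hj t ht
    have hu : x j t ≠ 0 := (hpos j hj t ht).ne'
    have hx := hode j hj t ht
    have h1 : HasDerivAt (fun s => (x j 0) ^ 6 * ((x j s)⁻¹) ^ 5)
        ((x j 0) ^ 6 * ((5 : ℕ) * ((x j t)⁻¹) ^ (5 - 1) *
          (-(x j t * ∑ i ∈ Finset.Icc 1 (j - 1), x i t * Gam x i t ^ 2) / x j t ^ 2))) t :=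
      ((hx.inv hu).pow 5).const_mul _
    have hfun : (fun s => (x j 0) ^ 6 * ((x j s)⁻¹) ^ 5) = fun s => bb x j s :=
      funext fun s => (heq j s).symm
    rw [hfun] at h1
    convert h1 using 1
    rw [heq j t, hSeq]
    field_simp
    have h4 : x j t ^ 4 * (1 / x j t) ^ (5 - 1) = 1 := by
      rw [show (5:ℕ) - 1 = 4 from rfl, ← mul_pow, mul_one_div_cancel hu, one_pow]
    linear_combination (5 * x j 0 ^ 6 * ∑ i ∈ Finset.Icc 1 (j - 1), x i t * Gam x i t ^ 2) * h4
  refine ⟨part1, ?_⟩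
  intro k hk t ht
  have hsum : HasDerivAt (fun s => ∑ j ∈ Finset.Icc 1 k, bb x j s)
      (∑ j ∈ Finset.Icc 1 k, -5 * bb x j t * SS x (j - 1) t) t := by
    apply HasDerivAt.fun_sum
    intro j hj
    exact part1 j (Finset.mem_Icc.mp hj).1 t ht
  have hfun : (fun s => ∑ j ∈ Finset.Icc 1 k, bb x j s) = fun s => SS x k s := rfl
  rw [hfun] at hsum
  convert hsum using 1
  have htel := telescope_aux (fun j => bb x j t) k
  simp only [SS]
  have hs : ∑ j ∈ Finset.Icc 1 k, -5 * bb x j t * (∑ i ∈ Finset.Icc 1 (j - 1), bb x i t)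
      = (-5 / 2) * (2 * ∑ j ∈ Finset.Icc 1 k, bb x j t * (∑ i ∈ Finset.Icc 1 (j - 1), bb x i t)) := by
    rw [Finset.mul_sum, Finset.mul_sum]
    apply Finset.sum_congr rfl
    intros
    ring
  rw [hs, htel]
  ring
end
end

section
/- Fix 0 < alpha < 2/7 and 0 < epsilon <= 1. Let x_k : [0,infty) -> (0,infty), k = 1, 2, 3, ..., be differentiable functions with x_k(0) = epsilon k^{-alpha}, satisfying for every k >= 1 and t >= 0 the triangular ODE system x_k'(t) = x_k(t) Sum_{j=1}^{k-1} x_j(t) Gamma_j(t)^2 (empty sum = 0 for k = 1), where Gamma_j(t) := (x_j(0)/x_j(t))^3. Then for every fixed t > 0, x_k(t) -> infty as k -> infty. -/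
noncomputable section

open Real Set Finset Filter

/-- Symmetrization: `∑_{j≤n} e_j ∑_{i<j} e_i ≤ (∑ e_j)²/2`. -/
lemma aux_pair_sum (e : ℕ → ℝ) (n : ℕ) :
    ∑ j ∈ Finset.Icc 1 n, e j * ∑ i ∈ Finset.Icc 1 (j - 1), e i
      ≤ (∑ j ∈ Finset.Icc 1 n, e j) ^ 2 / 2 := by
  induction n with
  | zero => simp
  | succ n ih =>
    rw [Finset.sum_Icc_succ_top (by omega : 1 ≤ n + 1),
        Finset.sum_Icc_succ_top (by omega : 1 ≤ n + 1)]
    simp only [Nat.add_sub_cancel]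
    nlinarith [ih, sq_nonneg (e (n + 1))]

/-- A function with nonnegative derivative on `[0,∞)` is monotone there. -/
lemma aux_mono_of_deriv {f f' : ℝ → ℝ}
    (hf : ∀ s : ℝ, 0 ≤ s → HasDerivAt f (f' s) s)
    (h : ∀ s : ℝ, 0 ≤ s → 0 ≤ f' s) {a b : ℝ} (ha : 0 ≤ a) (hab : a ≤ b) :
    f a ≤ f b := by
  have hmono : MonotoneOn f (Set.Ici (0 : ℝ)) := by
    apply monotoneOn_of_deriv_nonneg (convex_Ici 0)
    · intro s hs
      exact (hf s hs).continuousAt.continuousWithinAt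
    · intro s hs
      rw [interior_Ici] at hs
      exact ((hf s hs.le).differentiableAt).differentiableWithinAt
    · intro s hs
      rw [interior_Ici] at hs
      rw [(hf s hs.le).deriv]
      exact h s hs.le
  exact hmono (Set.mem_Ici.mpr ha) (Set.mem_Ici.mpr (le_trans ha hab)) hab

/-- Fix `0 < α < 2/7` and `0 < ε ≤ 1`.  Let `x_k : [0,∞) → (0,∞)`,
`k = 1, 2, …`, be differentiable functions with `x_k(0) = ε k^(-α)`, satisfying for every
`k ≥ 1` and `t ≥ 0` the triangular ODE system
`x_k'(t) = x_k(t) Σ_{j=1}^{k-1} x_j(t) Γ_j(t)²` (empty sum for `k = 1`), where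
`Γ_j(t) = (x_j(0)/x_j(t))³`.  Then for every fixed `t > 0`, `x_k(t) → ∞` as `k → ∞`. -/
theorem flattened_cascade_norm_inflation (α ε : ℝ)
    (hα0 : 0 < α) (hα : α < 2 / 7) (hε0 : 0 < ε) (hε1 : ε ≤ 1)
    (x : ℕ → ℝ → ℝ)
    (hinit : ∀ k, 1 ≤ k → x k 0 = ε * (k : ℝ) ^ (-α))
    (hpos : ∀ k, 1 ≤ k → ∀ t : ℝ, 0 ≤ t → 0 < x k t)
    (hode : ∀ k, 1 ≤ k → ∀ t : ℝ, 0 ≤ t →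
      HasDerivAt (x k) (x k t * ∑ j ∈ Finset.Icc 1 (k - 1), x j t * Gam x j t ^ 2) t) :
    ∀ t : ℝ, 0 < t → Tendsto (fun k => x k t) atTop atTop := by
  intro t ht
  have hα1 : α < 1 := by linarith
  have hx0 : ∀ j, 1 ≤ j → 0 < x j 0 := fun j hj => hpos j hj 0 le_rfl
  set F : ℕ → ℝ → ℝ := fun k s => ∑ j ∈ Finset.Icc 1 (k - 1), (x j 0) ^ 6 / (x j s) ^ 5
    with hFdef
  -- the forcing terms rewritten
  have he_eq : ∀ j, 1 ≤ j → ∀ s : ℝ, 0 ≤ s →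
      x j s * Gam x j s ^ 2 = (x j 0) ^ 6 / (x j s) ^ 5 := by
    intro j hj s hs
    have h1 : x j s ≠ 0 := (hpos j hj s hs).ne'
    simp only [Gam]
    field_simp
  have hxd : ∀ k, 1 ≤ k → ∀ s : ℝ, 0 ≤ s → HasDerivAt (x k) (x k s * F k s) s := by
    intro k hk s hs
    have h := hode k hk s hs
    have hsum : (∑ j ∈ Finset.Icc 1 (k - 1), x j s * Gam x j s ^ 2) = F k s :=
      Finset.sum_congr rfl fun j hj => he_eq j (Finset.mem_Icc.mp hj).1 s hs
    rwa [hsum] at h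
  -- positivity of the forcing for k ≥ 2
  have hFpos : ∀ k, 2 ≤ k → ∀ s : ℝ, 0 ≤ s → 0 < F k s := by
    intro k hk s hs
    apply Finset.sum_pos
    · intro j hj
      have hj1 : 1 ≤ j := (Finset.mem_Icc.mp hj).1
      exact div_pos (pow_pos (hx0 j hj1) 6) (pow_pos (hpos j hj1 s hs) 5)
    · exact ⟨1, Finset.mem_Icc.mpr ⟨le_refl 1, by omega⟩⟩
  -- derivative of the forcing
  have hFd : ∀ k, ∀ s : ℝ, 0 ≤ s →
      HasDerivAt (F k)
        (∑ j ∈ Finset.Icc 1 (k - 1), (-5) * ((x j 0) ^ 6 / (x j s) ^ 5) * F j s) s := by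
    intro k s hs
    apply HasDerivAt.fun_sum
    intro j hj
    have hj1 : 1 ≤ j := (Finset.mem_Icc.mp hj).1
    have hxj : (0:ℝ) < x j s := hpos j hj1 s hs
    have h5 : HasDerivAt (fun u => (x j u) ^ 5)
        ((5 : ℕ) * (x j s) ^ (5 - 1) * (x j s * F j s)) s := (hxd j hj1 s hs).pow 5
    have hd := (hasDerivAt_const s ((x j 0) ^ 6)).div h5 (pow_ne_zero 5 hxj.ne')
    refine hd.congr_deriv ?_
    have : x j s ≠ 0 := hxj.ne'
    field_simp
    ring
  -- Riccati inequality: F' ≥ -(5/2) F²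
  have hFd_ge : ∀ k, ∀ s : ℝ, 0 ≤ s →
      (-(5:ℝ)/2) * (F k s) ^ 2 ≤
        ∑ j ∈ Finset.Icc 1 (k - 1), (-5) * ((x j 0) ^ 6 / (x j s) ^ 5) * F j s := by
    intro k s hs
    have h := aux_pair_sum (fun j => (x j 0) ^ 6 / (x j s) ^ 5) (k - 1)
    have hsum : ∑ j ∈ Finset.Icc 1 (k - 1), (-5) * ((x j 0) ^ 6 / (x j s) ^ 5) * F j s
        = (-5) * ∑ j ∈ Finset.Icc 1 (k - 1), ((x j 0) ^ 6 / (x j s) ^ 5) * F j s := by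
      rw [Finset.mul_sum]
      exact Finset.sum_congr rfl fun j hj => by ring
    rw [hsum]
    have h2 : ∑ j ∈ Finset.Icc 1 (k - 1), ((x j 0) ^ 6 / (x j s) ^ 5) * F j s
        ≤ (F k s) ^ 2 / 2 := h
    linarith
  -- comparison: (F k s)⁻¹ ≤ (F k 0)⁻¹ + (5/2) s
  have hinv_le : ∀ k, 2 ≤ k → ∀ s : ℝ, 0 ≤ s →
      (F k s)⁻¹ ≤ (F k 0)⁻¹ + 5 / 2 * s := by
    intro k hk s hs
    have hmono := aux_mono_of_deriv (f := fun u => 5 / 2 * u - (F k u)⁻¹)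
      (f' := fun u => 5 / 2 +
        (∑ j ∈ Finset.Icc 1 (k - 1), (-5) * ((x j 0) ^ 6 / (x j u) ^ 5) * F j u) / (F k u) ^ 2)
      (by
        intro u hu
        have h1 : HasDerivAt (fun v : ℝ => 5 / 2 * v) (5 / 2) u := by
          simpa using (hasDerivAt_id u).const_mul (5 / 2 : ℝ)
        have h2 := (hFd k u hu).inv (hFpos k hk u hu).ne'
        have h3 := h1.sub h2
        exact h3.congr_deriv (by ring))
      (by
        intro u hu
        have hF2 : (0:ℝ) < (F k u) ^ 2 := pow_pos (hFpos k hk u hu) 2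
        have hge := hFd_ge k u hu
        have : -(5 / 2 : ℝ) ≤
            (∑ j ∈ Finset.Icc 1 (k - 1), (-5) * ((x j 0) ^ 6 / (x j u) ^ 5) * F j u)
              / (F k u) ^ 2 := by
          rw [le_div_iff₀ hF2]
          linarith
        linarith)
      le_rfl hs
    have h0 : (5:ℝ) / 2 * 0 - (F k 0)⁻¹ = -(F k 0)⁻¹ := by ring
    linarith [hmono]
  -- logarithmic lower bound via integration of the Riccati solution
  have hlog : ∀ k, 2 ≤ k →
      Real.log (x k 0) - 2 / 5 * Real.log ((F k 0)⁻¹) ≤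
        Real.log (x k t) - 2 / 5 * Real.log ((F k 0)⁻¹ + 5 / 2 * t) := by
    intro k hk
    have hk1 : 1 ≤ k := by omega
    have hA : (0:ℝ) < (F k 0)⁻¹ := inv_pos.mpr (hFpos k hk 0 le_rfl)
    have harg : ∀ s : ℝ, 0 ≤ s → (0:ℝ) < (F k 0)⁻¹ + 5 / 2 * s := by
      intro s hs; nlinarith
    have hmono := aux_mono_of_deriv
      (f := fun u => Real.log (x k u) - 2 / 5 * Real.log ((F k 0)⁻¹ + 5 / 2 * u))
      (f' := fun u => x k u * F k u / x k u - 2 / 5 * (5 / 2 / ((F k 0)⁻¹ + 5 / 2 * u)))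
      (by
        intro u hu
        have h1 : HasDerivAt (fun v => Real.log (x k v)) (x k u * F k u / x k u) u :=
          (hxd k hk1 u hu).log (hpos k hk1 u hu).ne'
        have h2 : HasDerivAt (fun v : ℝ => (F k 0)⁻¹ + 5 / 2 * v) (5 / 2) u := by
          simpa using ((hasDerivAt_id u).const_mul (5 / 2 : ℝ)).const_add ((F k 0)⁻¹)
        have h3 := (h2.log (harg u hu).ne').const_mul (2 / 5 : ℝ)
        exact h1.sub h3)
      (by
        intro u hu
        have hxu : (0:ℝ) < x k u := hpos k hk1 u hu
        have hFu : (0:ℝ) < F k u := hFpos k hk u hu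
        have hBu : (0:ℝ) < (F k 0)⁻¹ + 5 / 2 * u := harg u hu
        have hsimp : x k u * F k u / x k u = F k u := by
          field_simp
        have hsimp2 : (2:ℝ) / 5 * (5 / 2 / ((F k 0)⁻¹ + 5 / 2 * u))
            = ((F k 0)⁻¹ + 5 / 2 * u)⁻¹ := by
          field_simp
        show 0 ≤ x k u * F k u / x k u - 2 / 5 * (5 / 2 / ((F k 0)⁻¹ + 5 / 2 * u))
        rw [hsimp, hsimp2]
        have hle : (F k u)⁻¹ ≤ (F k 0)⁻¹ + 5 / 2 * u := hinv_le k hk u hu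
        have := inv_anti₀ (inv_pos.mpr hFu) hle
        rw [inv_inv] at this
        linarith)
      le_rfl ht.le
    simpa using hmono
  -- lower bound on F k 0
  have hA_ge : ∀ k : ℕ, 2 ≤ k → ε * ((k:ℝ) - 1) ^ (1 - α) ≤ F k 0 := by
    intro k hk
    have hk1pos : (0:ℝ) < (k:ℝ) - 1 := by
      have : (2:ℝ) ≤ (k:ℝ) := by exact_mod_cast hk
      linarith
    have hcast : ((k - 1 : ℕ) : ℝ) = (k:ℝ) - 1 := by
      have h1 : 1 ≤ k := by omega
      rw [Nat.cast_sub h1]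
      norm_num
    have hFeq : F k 0 = ∑ j ∈ Finset.Icc 1 (k - 1), x j 0 := by
      apply Finset.sum_congr rfl
      intro j hj
      have hj1 : 1 ≤ j := (Finset.mem_Icc.mp hj).1
      have hne : x j 0 ≠ 0 := (hx0 j hj1).ne'
      field_simp
    rw [hFeq]
    have hterm : ∀ j ∈ Finset.Icc 1 (k - 1), ε * ((k:ℝ) - 1) ^ (-α) ≤ x j 0 := by
      intro j hj
      obtain ⟨hj1, hj2⟩ := Finset.mem_Icc.mp hj
      rw [hinit j hj1]
      have hjpos : (0:ℝ) < (j:ℝ) := by exact_mod_cast hj1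
      have hjle : (j:ℝ) ≤ (k:ℝ) - 1 := by
        rw [← hcast]; exact_mod_cast hj2
      have hbase : ((k:ℝ) - 1) ^ (-α) ≤ (j:ℝ) ^ (-α) := by
        rw [Real.rpow_neg hjpos.le, Real.rpow_neg hk1pos.le]
        exact inv_anti₀ (Real.rpow_pos_of_pos hjpos α)
          (Real.rpow_le_rpow hjpos.le hjle hα0.le)
      exact mul_le_mul_of_nonneg_left hbase hε0.le
    calc ε * ((k:ℝ) - 1) ^ (1 - α)
        = ((k:ℝ) - 1) * (ε * ((k:ℝ) - 1) ^ (-α)) := by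
          rw [show (1 - α) = 1 + (-α) by ring, Real.rpow_add hk1pos, Real.rpow_one]
          ring
      _ = (Finset.Icc 1 (k - 1)).card * (ε * ((k:ℝ) - 1) ^ (-α)) := by
          rw [Nat.card_Icc]
          congr 1
          rw [show k - 1 + 1 - 1 = k - 1 from by omega, hcast]
      _ = ∑ _j ∈ Finset.Icc 1 (k - 1), ε * ((k:ℝ) - 1) ^ (-α) := by
          rw [Finset.sum_const, nsmul_eq_mul]
      _ ≤ ∑ j ∈ Finset.Icc 1 (k - 1), x j 0 := Finset.sum_le_sum hterm
  -- the main quantitative lower bound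
  set β : ℝ := 2 / 5 * (1 - α) - α with hβdef
  have hβ : 0 < β := by rw [hβdef]; linarith
  set C : ℝ := Real.log ε + 2 / 5 * Real.log (5 / 2 * t) + 2 / 5 * Real.log ε
      - α * Real.log 2 with hCdef
  have key : ∀ k : ℕ, 2 ≤ k → C + β * Real.log ((k:ℝ) - 1) ≤ Real.log (x k t) := by
    intro k hk
    have hk1 : 1 ≤ k := by omega
    have hkR : (2:ℝ) ≤ (k:ℝ) := by exact_mod_cast hk
    have hk1pos : (0:ℝ) < (k:ℝ) - 1 := by linarith
    have hkpos : (0:ℝ) < (k:ℝ) := by linarith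
    have hApos : (0:ℝ) < F k 0 := hFpos k hk 0 le_rfl
    set L : ℝ := Real.log ((k:ℝ) - 1) with hLdef
    -- log of initial data
    have hlog0 : Real.log (x k 0) = Real.log ε - α * Real.log (k:ℝ) := by
      rw [hinit k hk1, Real.log_mul hε0.ne' (Real.rpow_pos_of_pos hkpos (-α)).ne',
        Real.log_rpow hkpos]
      ring
    -- log k ≤ L + log 2
    have hlogk : Real.log (k:ℝ) ≤ L + Real.log 2 := by
      have h1 : (k:ℝ) ≤ 2 * ((k:ℝ) - 1) := by linarith
      have h2 : Real.log (k:ℝ) ≤ Real.log (2 * ((k:ℝ) - 1)) :=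
        Real.log_le_log hkpos h1
      rwa [Real.log_mul (by norm_num) hk1pos.ne', add_comm] at h2
    -- log of F k 0
    have hlogA : Real.log ε + (1 - α) * L ≤ Real.log (F k 0) := by
      have h1 : Real.log (ε * ((k:ℝ) - 1) ^ (1 - α)) ≤ Real.log (F k 0) :=
        Real.log_le_log (by positivity) (hA_ge k hk)
      rwa [Real.log_mul hε0.ne' (Real.rpow_pos_of_pos hk1pos _).ne',
        Real.log_rpow hk1pos] at h1
    -- log ((F k 0)⁻¹ + 5/2 t) ≥ log (5/2 t)
    have hlogB : Real.log (5 / 2 * t) ≤ Real.log ((F k 0)⁻¹ + 5 / 2 * t) := by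
      apply Real.log_le_log (by linarith)
      have : (0:ℝ) < (F k 0)⁻¹ := inv_pos.mpr hApos
      linarith
    have hloginv : Real.log ((F k 0)⁻¹) = -Real.log (F k 0) := Real.log_inv _
    have hmain := hlog k hk
    rw [hlog0, hloginv] at hmain
    -- multiply hypotheses by the nonneg constants
    have hm1 : α * Real.log (k:ℝ) ≤ α * (L + Real.log 2) :=
      mul_le_mul_of_nonneg_left hlogk hα0.le
    have hm2 : 2 / 5 * (Real.log ε + (1 - α) * L) ≤ 2 / 5 * Real.log (F k 0) :=
      mul_le_mul_of_nonneg_left hlogA (by norm_num)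
    have hm3 : 2 / 5 * Real.log (5 / 2 * t) ≤ 2 / 5 * Real.log ((F k 0)⁻¹ + 5 / 2 * t) :=
      mul_le_mul_of_nonneg_left hlogB (by norm_num)
    rw [hCdef, hβdef]
    nlinarith [hmain, hm1, hm2, hm3]
  -- conclude: the explicit lower bound tends to infinity
  have h1 : Tendsto (fun k : ℕ => ((k:ℝ) - 1)) atTop atTop := by
    have := tendsto_atTop_add_const_right atTop (-1 : ℝ)
      (tendsto_natCast_atTop_atTop (R := ℝ))
    simpa [sub_eq_add_neg] using this
  have h2 : Tendsto (fun k : ℕ => Real.log ((k:ℝ) - 1)) atTop atTop :=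
    Real.tendsto_log_atTop.comp h1
  have h3 : Tendsto (fun k : ℕ => C + β * Real.log ((k:ℝ) - 1)) atTop atTop :=
    tendsto_atTop_add_const_left _ C (h2.const_mul_atTop hβ)
  have h4 : Tendsto (fun k : ℕ => Real.exp (C + β * Real.log ((k:ℝ) - 1))) atTop atTop :=
    Real.tendsto_exp_atTop.comp h3
  apply tendsto_atTop_mono' atTop ?_ h4
  filter_upwards [eventually_ge_atTop 2] with k hk
  have hkey := key k hk
  calc Real.exp (C + β * Real.log ((k:ℝ) - 1))
      ≤ Real.exp (Real.log (x k t)) := Real.exp_le_exp.mpr hkey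
    _ = x k t := Real.exp_log (hpos k (by omega) t ht.le)
end
end

section
/- Let Lambda : (0,1] -> (0,infty) be C^1 and nonincreasing. Fix epsilon > 0 and 0 < alpha < 2/7. Let x_k : [0,infty) -> (0,infty), k = 1, 2, 3, ..., be differentiable, nondecreasing functions with x_k(0) = epsilon k^{-alpha} (so that Gamma_j(t) := (x_j(0)/x_j(t))^3 lies in (0,1] for all j and t), satisfying for every k >= 1 and t >= 0 the triangular ODE system x_k'(t) = x_k(t) Sum_{j=1}^{k-1} x_j(t) Gamma_j(t)^2 Lambda(Gamma_j(t)) (empty sum = 0 for k = 1). Then for every fixed t > 0, x_k(t) -> infty as k -> infty. -/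
noncomputable section

open Real Set Finset Filter

/-- Forcing term of shell `j`. -/
def Saux (Λ : ℝ → ℝ) (x : ℕ → ℝ → ℝ) (j : ℕ) (s : ℝ) : ℝ :=
  x j s * Gam x j s ^ 2 * Λ (Gam x j s)

/-- Total forcing on shell `k` (logarithmic derivative of `x_k`). -/
def Faux (Λ : ℝ → ℝ) (x : ℕ → ℝ → ℝ) (k : ℕ) (s : ℝ) : ℝ :=
  ∑ j ∈ Finset.Icc 1 (k - 1), Saux Λ x j s

/-- Derivative of the forcing term of shell `j`. -/
def Daux (Λ Λ' : ℝ → ℝ) (x : ℕ → ℝ → ℝ) (j : ℕ) (s : ℝ) : ℝ :=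
  -5 * Faux Λ x j s * Saux Λ x j s
    - 3 * Faux Λ x j s * x j s * Gam x j s ^ 3 * Λ' (Gam x j s)

/-- Abel-type estimate: `∑_j f_j ∑_{i<j} f_i ≤ (∑ f)²/2` for nonnegative `f`. -/
lemma sum_mul_prefix_le (f : ℕ → ℝ) :
    ∀ n : ℕ, (∀ i ∈ Finset.Icc 1 n, 0 ≤ f i) →
    ∑ j ∈ Finset.Icc 1 n, f j * ∑ i ∈ Finset.Icc 1 (j - 1), f i
      ≤ (∑ j ∈ Finset.Icc 1 n, f j) ^ 2 / 2 := by
  intro n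
  induction n with
  | zero => intro _; simp
  | succ n ih =>
      intro hf
      have hf' : ∀ i ∈ Finset.Icc 1 n, 0 ≤ f i := by
        intro i hi
        rcases Finset.mem_Icc.1 hi with ⟨h1, h2⟩
        exact hf i (Finset.mem_Icc.2 ⟨h1, h2.trans (Nat.le_succ n)⟩)
      have h1n : 1 ≤ n + 1 := Nat.succ_le_succ (Nat.zero_le n)
      rw [Finset.sum_Icc_succ_top h1n, Finset.sum_Icc_succ_top h1n]
      simp only [Nat.add_sub_cancel]
      have hT : 0 ≤ ∑ j ∈ Finset.Icc 1 n, f j := Finset.sum_nonneg hf'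
      have hfn : 0 ≤ f (n + 1) := hf (n + 1) (Finset.mem_Icc.2 ⟨h1n, le_rfl⟩)
      have h := ih hf'
      nlinarith [sq_nonneg (f (n + 1))]

set_option maxHeartbeats 2000000 in
/-- Let `Λ : (0,1] → (0,∞)` be `C¹` (with derivative `Λ'`) and
nonincreasing.  Fix `ε > 0` and `0 < α < 2/7`.  Let `x_k : [0,∞) → (0,∞)`, `k = 1, 2, …`,
be differentiable, nondecreasing functions with `x_k(0) = ε k^(-α)` (so that
`Γ_j(t) = (x_j(0)/x_j(t))³ ∈ (0,1]`), satisfying for every `k ≥ 1` and `t ≥ 0` the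
triangular ODE system `x_k'(t) = x_k(t) Σ_{j=1}^{k-1} x_j(t) Γ_j(t)² Λ(Γ_j(t))`
(empty sum for `k = 1`).  Then for every fixed `t > 0`, `x_k(t) → ∞` as `k → ∞`. -/
theorem frozen_profile_cascade_norm_inflation (Λ Λ' : ℝ → ℝ)
    (hΛpos : ∀ Γ ∈ Ioc (0 : ℝ) 1, 0 < Λ Γ)
    (hΛderiv : ∀ Γ ∈ Ioc (0 : ℝ) 1, HasDerivWithinAt Λ (Λ' Γ) (Ioc (0 : ℝ) 1) Γ)
    (hΛ'cont : ContinuousOn Λ' (Ioc (0 : ℝ) 1))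
    (hΛmono : AntitoneOn Λ (Ioc (0 : ℝ) 1))
    (α ε : ℝ) (hε : 0 < ε) (hα0 : 0 < α) (hα : α < 2 / 7)
    (x : ℕ → ℝ → ℝ)
    (hinit : ∀ k, 1 ≤ k → x k 0 = ε * (k : ℝ) ^ (-α))
    (hpos : ∀ k, 1 ≤ k → ∀ t : ℝ, 0 ≤ t → 0 < x k t)
    (hmono : ∀ k, 1 ≤ k → MonotoneOn (x k) (Ici (0 : ℝ)))
    (hode : ∀ k, 1 ≤ k → ∀ t : ℝ, 0 ≤ t →
      HasDerivAt (x k)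
        (x k t * ∑ j ∈ Finset.Icc 1 (k - 1), x j t * Gam x j t ^ 2 * Λ (Gam x j t)) t) :
    ∀ t : ℝ, 0 < t → Tendsto (fun k => x k t) atTop atTop := by
  intro t ht
  have hlam1 : 0 < Λ 1 := hΛpos 1 ⟨one_pos, le_rfl⟩
  -- the derivative of the antitone function Λ is nonpositive
  have hΛ'np : ∀ Γ ∈ Ioc (0 : ℝ) 1, Λ' Γ ≤ 0 := by
    rintro Γ ⟨hΓ0, hΓ1⟩
    have hd := hΛderiv Γ ⟨hΓ0, hΓ1⟩
    rw [hasDerivWithinAt_iff_tendsto_slope] at hd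
    have hsub : Ioo (0 : ℝ) Γ ⊆ Ioc (0 : ℝ) 1 \ {Γ} := by
      intro y hy
      exact ⟨⟨hy.1, hy.2.le.trans hΓ1⟩, by simp [ne_of_lt hy.2]⟩
    haveI hne : (nhdsWithin Γ (Ioo (0 : ℝ) Γ)).NeBot := by
      rw [← mem_closure_iff_nhdsWithin_neBot, closure_Ioo (ne_of_lt hΓ0)]
      exact ⟨hΓ0.le, le_rfl⟩
    have hd2 : Tendsto (slope Λ Γ) (nhdsWithin Γ (Ioo (0 : ℝ) Γ)) (nhds (Λ' Γ)) :=
      hd.mono_left (nhdsWithin_mono Γ hsub)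
    refine le_of_tendsto hd2 ?_
    filter_upwards [self_mem_nhdsWithin] with y hy
    have h1 : Λ Γ ≤ Λ y := hΛmono ⟨hy.1, hy.2.le.trans hΓ1⟩ ⟨hΓ0, hΓ1⟩ hy.2.le
    have h2 : y - Γ < 0 := sub_neg.2 hy.2
    rw [slope_def_field]
    exact div_nonpos_iff.mpr (Or.inl ⟨by linarith, h2.le⟩)
  -- basic positivity facts
  have hx0pos : ∀ j, 1 ≤ j → 0 < x j 0 := fun j hj => hpos j hj 0 le_rfl
  have hxle : ∀ j, 1 ≤ j → ∀ s : ℝ, 0 ≤ s → x j 0 ≤ x j s := fun j hj s hs =>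
    hmono j hj self_mem_Ici hs hs
  have hGmem : ∀ j, 1 ≤ j → ∀ s : ℝ, 0 ≤ s → Gam x j s ∈ Ioc (0 : ℝ) 1 := by
    intro j hj s hs
    have h0 := hx0pos j hj
    have hsp := hpos j hj s hs
    have hle := hxle j hj s hs
    refine ⟨pow_pos (div_pos h0 hsp) 3, ?_⟩
    exact pow_le_one₀ (div_pos h0 hsp).le ((div_le_one hsp).2 hle)
  have hGpos : ∀ j, 1 ≤ j → ∀ s : ℝ, 0 ≤ s → 0 < Gam x j s :=
    fun j hj s hs => (hGmem j hj s hs).1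
  have hSpos : ∀ j, 1 ≤ j → ∀ s : ℝ, 0 ≤ s → 0 < Saux Λ x j s := by
    intro j hj s hs
    have hl := hΛpos _ (hGmem j hj s hs)
    have hxp := hpos j hj s hs
    have hgp := hGpos j hj s hs
    exact mul_pos (mul_pos hxp (pow_pos hgp 2)) hl
  have hFnonneg : ∀ k : ℕ, ∀ s : ℝ, 0 ≤ s → 0 ≤ Faux Λ x k s := by
    intro k s hs
    exact Finset.sum_nonneg fun j hj => (hSpos j (Finset.mem_Icc.1 hj).1 s hs).le
  have hode' : ∀ k, 1 ≤ k → ∀ s : ℝ, 0 ≤ s →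
      HasDerivAt (x k) (x k s * Faux Λ x k s) s := by
    intro k hk s hs
    simpa only [Faux, Saux] using hode k hk s hs
  -- derivative of Gam
  have hGd : ∀ j, 1 ≤ j → ∀ s : ℝ, 0 ≤ s →
      HasDerivAt (Gam x j) (-3 * Gam x j s * Faux Λ x j s) s := by
    intro j hj s hs
    have hxj := hode' j hj s hs
    have hne : x j s ≠ 0 := (hpos j hj s hs).ne'
    have h1 : HasDerivAt (fun r => x j 0 / x j r)
        ((0 * x j s - x j 0 * (x j s * Faux Λ x j s)) / x j s ^ 2) s :=
      (hasDerivAt_const s (x j 0)).div hxj hne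
    have h2 := h1.fun_pow 3
    have h3 : HasDerivAt (fun r => (x j 0 / x j r) ^ 3)
        (-3 * Gam x j s * Faux Λ x j s) s := by
      refine h2.congr_deriv ?_
      simp only [Gam]
      rw [show (3:ℕ) - 1 = 2 from rfl]
      field_simp
      ring
    exact h3
  -- derivative of the forcing term S_j, with the key one-sided bound
  have hSd : ∀ j, 1 ≤ j → ∀ s : ℝ, 0 ≤ s →
      HasDerivWithinAt (Saux Λ x j) (Daux Λ Λ' x j s) (Ici 0) s := by
    intro j hj s hs
    have hxj := hode' j hj s hs
    have hG := hGd j hj s hs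
    have hmaps : MapsTo (Gam x j) (Ici (0 : ℝ)) (Ioc (0 : ℝ) 1) :=
      fun r hr => hGmem j hj r hr
    have hLam : HasDerivWithinAt (fun r => Λ (Gam x j r))
        (Λ' (Gam x j s) * (-3 * Gam x j s * Faux Λ x j s)) (Ici 0) s := by
      have := (hΛderiv (Gam x j s) (hGmem j hj s hs)).comp s hG.hasDerivWithinAt hmaps
      simpa [Function.comp_def] using this
    have hG2 : HasDerivWithinAt (fun r => Gam x j r ^ 2)
        ((2 : ℝ) * Gam x j s ^ 1 * (-3 * Gam x j s * Faux Λ x j s)) (Ici 0) s := by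
      simpa using (hG.fun_pow 2).hasDerivWithinAt (s := Ici 0)
    have hxG := hxj.hasDerivWithinAt.fun_mul hG2
    have hfull := hxG.fun_mul hLam
    have h3 : HasDerivWithinAt (fun r => x j r * Gam x j r ^ 2 * Λ (Gam x j r))
        (Daux Λ Λ' x j s) (Ici 0) s := by
      refine hfull.congr_deriv ?_
      simp only [Daux, Saux]
      push_cast
      ring
    exact h3
  have hA0 : (0 : ℝ) < 5 / 2 * (ε * Λ 1) * t :=
    mul_pos (mul_pos (by norm_num : (0:ℝ) < 5 / 2) (mul_pos hε hlam1)) ht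
  -- the key quantitative lower bound for each shell k ≥ 2
  have key : ∀ k : ℕ, 2 ≤ k →
      ε * (5 / 2 * (ε * Λ 1) * t) ^ ((2 : ℝ) / 5) / (2 : ℝ) ^ ((1 - α) * (2 / 5))
        * (k : ℝ) ^ ((1 - α) * (2 / 5) - α) ≤ x k t := by
    intro k hk2
    have hk1 : 1 ≤ k := by omega
    have hkm : 1 ≤ k - 1 := by omega
    have hFpos : ∀ s : ℝ, 0 ≤ s → 0 < Faux Λ x k s := by
      intro s hs
      refine Finset.sum_pos (fun j hj => hSpos j (Finset.mem_Icc.1 hj).1 s hs) ?_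
      exact ⟨1, Finset.mem_Icc.2 ⟨le_rfl, hkm⟩⟩
    -- derivative of F_k
    have hFd : ∀ s : ℝ, 0 ≤ s →
        HasDerivWithinAt (Faux Λ x k)
          (∑ j ∈ Finset.Icc 1 (k - 1), Daux Λ Λ' x j s) (Ici 0) s := by
      intro s hs
      exact HasDerivWithinAt.fun_sum fun j hj => hSd j (Finset.mem_Icc.1 hj).1 s hs
    -- lower bound on the derivative of F_k : F_k' ≥ -(5/2) F_k²
    have hDFb : ∀ s : ℝ, 0 ≤ s →
        -(5 / 2) * Faux Λ x k s ^ 2 ≤ ∑ j ∈ Finset.Icc 1 (k - 1), Daux Λ Λ' x j s := by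
      intro s hs
      have h1 : ∀ j ∈ Finset.Icc 1 (k - 1),
          -5 * (Saux Λ x j s * Faux Λ x j s) ≤ Daux Λ Λ' x j s := by
        intro j hj
        have hj1 := (Finset.mem_Icc.1 hj).1
        have hF := hFnonneg j s hs
        have hxp := (hpos j hj1 s hs).le
        have hgp := (pow_pos (hGpos j hj1 s hs) 3).le
        have hlp := neg_nonneg.2 (hΛ'np _ (hGmem j hj1 s hs))
        have hnn : 0 ≤ 3 * Faux Λ x j s * x j s * Gam x j s ^ 3 * (-(Λ' (Gam x j s))) :=
          mul_nonneg (mul_nonneg (mul_nonneg (by linarith) hxp) hgp) hlp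
        simp only [Daux]
        nlinarith [hnn]
      have h2 : ∑ j ∈ Finset.Icc 1 (k - 1), Saux Λ x j s * Faux Λ x j s
          ≤ Faux Λ x k s ^ 2 / 2 := by
        have h := sum_mul_prefix_le (fun i => Saux Λ x i s) (k - 1)
          (fun i hi => (hSpos i (Finset.mem_Icc.1 hi).1 s hs).le)
        simpa only [Faux] using h
      have h3 := Finset.sum_le_sum h1
      rw [← Finset.mul_sum] at h3
      nlinarith [h2, h3]
    -- the reciprocal of F_k grows at most linearly with slope 5/2
    have hYanti : AntitoneOn (fun s => (Faux Λ x k s)⁻¹ - 5 / 2 * s) (Ici 0) := by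
      have hYd : ∀ s : ℝ, 0 ≤ s →
          HasDerivWithinAt (fun r => (Faux Λ x k r)⁻¹ - 5 / 2 * r)
            (-(∑ j ∈ Finset.Icc 1 (k - 1), Daux Λ Λ' x j s) / Faux Λ x k s ^ 2 - 5 / 2)
            (Ici 0) s := by
        intro s hs
        have h1 := (hFd s hs).inv (hFpos s hs).ne'
        have h2 : HasDerivWithinAt (fun r : ℝ => 5 / 2 * r) (5 / 2) (Ici 0) s := by
          simpa using ((hasDerivAt_id s).const_mul ((5 : ℝ) / 2)).hasDerivWithinAt
        exact h1.sub h2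
      refine antitoneOn_of_deriv_nonpos (convex_Ici 0)
        (fun s hs => (hYd s hs).continuousWithinAt) ?_ ?_
      · intro s hs
        rw [interior_Ici] at hs
        exact ((hYd s hs.le).hasDerivAt (Ici_mem_nhds hs)).differentiableAt.differentiableWithinAt
      · intro s hs
        rw [interior_Ici] at hs
        rw [((hYd s hs.le).hasDerivAt (Ici_mem_nhds hs)).deriv]
        have hb := hDFb s hs.le
        have hF2 : (0 : ℝ) < Faux Λ x k s ^ 2 := pow_pos (hFpos s hs.le) 2
        have h4 : -(∑ j ∈ Finset.Icc 1 (k - 1), Daux Λ Λ' x j s) / Faux Λ x k s ^ 2 ≤ 5 / 2 := by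
          rw [div_le_iff₀ hF2]
          nlinarith [hb]
        linarith
    -- consequently F_k(s) ≥ q/(1 + (5/2) q s) where q = F_k(0)
    have hFlb : ∀ s : ℝ, 0 ≤ s →
        Faux Λ x k 0 / (1 + 5 / 2 * Faux Λ x k 0 * s) ≤ Faux Λ x k s := by
      intro s hs
      have hY := hYanti self_mem_Ici hs hs
      simp only at hY
      have hFs := hFpos s hs
      have hq := hFpos 0 le_rfl
      have hden : (0 : ℝ) < 1 + 5 / 2 * Faux Λ x k 0 * s := by
        nlinarith [mul_nonneg hq.le hs]
      rw [div_le_iff₀ hden]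
      have h1 : (Faux Λ x k s)⁻¹ ≤ (Faux Λ x k 0)⁻¹ + 5 / 2 * s := by
        have h0 : (Faux Λ x k 0)⁻¹ - 5 / 2 * 0 = (Faux Λ x k 0)⁻¹ := by ring
        linarith [hY]
      have h2 := mul_le_mul_of_nonneg_left h1 (mul_pos hq hFs).le
      have e1 : Faux Λ x k 0 * Faux Λ x k s * (Faux Λ x k s)⁻¹ = Faux Λ x k 0 := by
        field_simp
      have e2 : Faux Λ x k 0 * Faux Λ x k s * ((Faux Λ x k 0)⁻¹ + 5 / 2 * s)
          = Faux Λ x k s + 5 / 2 * s * (Faux Λ x k 0 * Faux Λ x k s) := by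
        field_simp
      rw [e1, e2] at h2
      nlinarith [h2]
    -- integrate: log x_k(s) - (2/5) log(1 + (5/2) q s) is nondecreasing
    have hq := hFpos 0 le_rfl
    have hZmono : MonotoneOn
        (fun s => Real.log (x k s)
          - 2 / 5 * Real.log (1 + 5 / 2 * Faux Λ x k 0 * s)) (Ici 0) := by
      have hZd : ∀ s : ℝ, 0 ≤ s →
          HasDerivAt (fun r => Real.log (x k r)
              - 2 / 5 * Real.log (1 + 5 / 2 * Faux Λ x k 0 * r))
            (Faux Λ x k s
              - 2 / 5 * ((5 / 2 * Faux Λ x k 0) / (1 + 5 / 2 * Faux Λ x k 0 * s))) s := by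
        intro s hs
        have hxs := hpos k hk1 s hs
        have h1 : HasDerivAt (fun r => Real.log (x k r))
            (x k s * Faux Λ x k s / x k s) s := (hode' k hk1 s hs).log hxs.ne'
        rw [mul_div_cancel_left₀ _ hxs.ne'] at h1
        have hden : (0 : ℝ) < 1 + 5 / 2 * Faux Λ x k 0 * s := by
          nlinarith [mul_nonneg hq.le hs]
        have h2 : HasDerivAt (fun r : ℝ => 1 + 5 / 2 * Faux Λ x k 0 * r)
            (5 / 2 * Faux Λ x k 0) s := by
          simpa using ((hasDerivAt_id s).const_mul (5 / 2 * Faux Λ x k 0)).const_add 1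
        have h3 := (h2.log hden.ne').const_mul (2 / 5 : ℝ)
        exact h1.sub h3
      refine monotoneOn_of_deriv_nonneg (convex_Ici 0)
        (fun s hs => ((hZd s hs).continuousAt).continuousWithinAt) ?_ ?_
      · intro s hs
        rw [interior_Ici] at hs
        exact (hZd s hs.le).differentiableAt.differentiableWithinAt
      · intro s hs
        rw [interior_Ici] at hs
        rw [(hZd s hs.le).deriv]
        have hden : (0 : ℝ) < 1 + 5 / 2 * Faux Λ x k 0 * s := by
          nlinarith [mul_nonneg hq.le hs.le]
        have hfl := hFlb s hs.le
        have heq : 2 / 5 * ((5 / 2 * Faux Λ x k 0) / (1 + 5 / 2 * Faux Λ x k 0 * s))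
            = Faux Λ x k 0 / (1 + 5 / 2 * Faux Λ x k 0 * s) := by ring
        rw [heq]
        linarith
    have hZ := hZmono self_mem_Ici (show t ∈ Ici (0 : ℝ) from ht.le) ht.le
    simp only at hZ
    have hlog : Real.log (x k 0) + 2 / 5 * Real.log (1 + 5 / 2 * Faux Λ x k 0 * t)
        ≤ Real.log (x k t) := by
      have e : (1 : ℝ) + 5 / 2 * Faux Λ x k 0 * 0 = 1 := by ring
      rw [e, Real.log_one] at hZ
      linarith
    -- exponentiate
    have hxk0 := hpos k hk1 0 le_rfl
    have hdent : (0 : ℝ) < 1 + 5 / 2 * Faux Λ x k 0 * t := by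
      nlinarith [mul_nonneg hq.le ht.le]
    have hmain : x k 0 * (1 + 5 / 2 * Faux Λ x k 0 * t) ^ ((2 : ℝ) / 5) ≤ x k t := by
      have hL : Real.log (x k 0 * (1 + 5 / 2 * Faux Λ x k 0 * t) ^ ((2 : ℝ) / 5))
          ≤ Real.log (x k t) := by
        rw [Real.log_mul hxk0.ne' (Real.rpow_pos_of_pos hdent _).ne',
          Real.log_rpow hdent]
        linarith
      have h5 := Real.exp_le_exp.2 hL
      rwa [Real.exp_log (mul_pos hxk0 (Real.rpow_pos_of_pos hdent _)),
        Real.exp_log (hpos k hk1 t ht.le)] at h5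
    -- lower bound on q = F_k(0)
    have hkm1pos : (0 : ℝ) < ((k - 1 : ℕ) : ℝ) := by
      have : (0 : ℕ) < k - 1 := by omega
      exact_mod_cast this
    have hq_lb : ε * Λ 1 * ((k - 1 : ℕ) : ℝ) ^ (1 - α) ≤ Faux Λ x k 0 := by
      have hterm : ∀ j ∈ Finset.Icc 1 (k - 1),
          ε * Λ 1 * ((k - 1 : ℕ) : ℝ) ^ (-α) ≤ Saux Λ x j 0 := by
        intro j hj
        rcases Finset.mem_Icc.1 hj with ⟨hj1, hjk⟩
        have hjpos : (0 : ℝ) < (j : ℝ) := by exact_mod_cast hj1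
        have hG0 : Gam x j 0 = 1 := by
          simp only [Gam]
          rw [div_self (hx0pos j hj1).ne']
          norm_num
        have hSval : Saux Λ x j 0 = ε * (j : ℝ) ^ (-α) * Λ 1 := by
          simp only [Saux]
          rw [hG0, hinit j hj1]
          ring
        rw [hSval]
        have hle : ((k - 1 : ℕ) : ℝ) ^ (-α) ≤ (j : ℝ) ^ (-α) := by
          rw [Real.rpow_neg hjpos.le, Real.rpow_neg hkm1pos.le]
          have h1 : (j : ℝ) ^ α ≤ ((k - 1 : ℕ) : ℝ) ^ α :=
            Real.rpow_le_rpow hjpos.le (by exact_mod_cast hjk) hα0.le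
          exact inv_anti₀ (Real.rpow_pos_of_pos hjpos α) h1
        have h2 := mul_le_mul_of_nonneg_left hle (mul_nonneg hε.le hlam1.le)
        nlinarith [h2]
      have hsum := Finset.card_nsmul_le_sum (Finset.Icc 1 (k - 1))
        (fun j => Saux Λ x j 0) (ε * Λ 1 * ((k - 1 : ℕ) : ℝ) ^ (-α)) hterm
      rw [Nat.card_Icc] at hsum
      have hc : k - 1 + 1 - 1 = k - 1 := by omega
      rw [hc, nsmul_eq_mul] at hsum
      have e3 : ε * Λ 1 * ((k - 1 : ℕ) : ℝ) ^ (1 - α)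
          = ((k - 1 : ℕ) : ℝ) * (ε * Λ 1 * ((k - 1 : ℕ) : ℝ) ^ (-α)) := by
        rw [show (1 : ℝ) - α = 1 + -α by ring, Real.rpow_add hkm1pos, Real.rpow_one]
        ring
      rw [e3]
      simpa only [Faux] using hsum
    -- final chain of estimates
    have hkR : (2 : ℝ) ≤ (k : ℝ) := by exact_mod_cast hk2
    have hkpos : (0 : ℝ) < (k : ℝ) := by linarith
    have hcast : ((k - 1 : ℕ) : ℝ) = (k : ℝ) - 1 := by
      rw [Nat.cast_sub hk1, Nat.cast_one]
    have hcast0 : (0 : ℝ) ≤ ((k - 1 : ℕ) : ℝ) := Nat.cast_nonneg _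
    have hβ : (0 : ℝ) ≤ (1 - α) * (2 / 5) := by nlinarith
    have h5 : 5 / 2 * (ε * Λ 1) * t * ((k - 1 : ℕ) : ℝ) ^ (1 - α)
        ≤ 1 + 5 / 2 * Faux Λ x k 0 * t := by
      have h := mul_le_mul_of_nonneg_left hq_lb (show (0 : ℝ) ≤ 5 / 2 * t by linarith)
      nlinarith [h]
    have h6 := Real.rpow_le_rpow (mul_nonneg hA0.le (Real.rpow_nonneg hcast0 _)) h5 (by norm_num : (0 : ℝ) ≤ 2 / 5)
    have h7 : (5 / 2 * (ε * Λ 1) * t * ((k - 1 : ℕ) : ℝ) ^ (1 - α)) ^ ((2 : ℝ) / 5)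
        = (5 / 2 * (ε * Λ 1) * t) ^ ((2 : ℝ) / 5)
          * ((k - 1 : ℕ) : ℝ) ^ ((1 - α) * (2 / 5)) := by
      rw [Real.mul_rpow hA0.le (Real.rpow_nonneg hcast0 _), ← Real.rpow_mul hcast0]
    have h8 : x k 0 * ((5 / 2 * (ε * Λ 1) * t) ^ ((2 : ℝ) / 5)
        * ((k - 1 : ℕ) : ℝ) ^ ((1 - α) * (2 / 5))) ≤ x k t := by
      rw [← h7]
      calc x k 0 * (5 / 2 * (ε * Λ 1) * t * ((k - 1 : ℕ) : ℝ) ^ (1 - α)) ^ ((2 : ℝ) / 5)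
          ≤ x k 0 * (1 + 5 / 2 * Faux Λ x k 0 * t) ^ ((2 : ℝ) / 5) :=
            mul_le_mul_of_nonneg_left h6 hxk0.le
        _ ≤ x k t := hmain
    have h9 : ((k : ℝ) / 2) ^ ((1 - α) * (2 / 5))
        ≤ ((k - 1 : ℕ) : ℝ) ^ ((1 - α) * (2 / 5)) := by
      apply Real.rpow_le_rpow (by positivity) _ hβ
      rw [hcast]
      linarith
    have h10 : ε * (5 / 2 * (ε * Λ 1) * t) ^ ((2 : ℝ) / 5) / (2 : ℝ) ^ ((1 - α) * (2 / 5))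
        * (k : ℝ) ^ ((1 - α) * (2 / 5) - α)
        ≤ x k 0 * ((5 / 2 * (ε * Λ 1) * t) ^ ((2 : ℝ) / 5)
          * ((k - 1 : ℕ) : ℝ) ^ ((1 - α) * (2 / 5))) := by
      rw [hinit k hk1]
      have e1 : (k : ℝ) ^ (-α) * (k : ℝ) ^ ((1 - α) * (2 / 5))
          = (k : ℝ) ^ ((1 - α) * (2 / 5) - α) := by
        rw [← Real.rpow_add hkpos]
        congr 1
        ring
      have e2 : ((k : ℝ) / 2) ^ ((1 - α) * (2 / 5))
          = (k : ℝ) ^ ((1 - α) * (2 / 5)) / (2 : ℝ) ^ ((1 - α) * (2 / 5)) :=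
        Real.div_rpow hkpos.le (by norm_num) _
      calc ε * (5 / 2 * (ε * Λ 1) * t) ^ ((2 : ℝ) / 5) / (2 : ℝ) ^ ((1 - α) * (2 / 5))
            * (k : ℝ) ^ ((1 - α) * (2 / 5) - α)
          = ε * (k : ℝ) ^ (-α) * ((5 / 2 * (ε * Λ 1) * t) ^ ((2 : ℝ) / 5)
            * ((k : ℝ) / 2) ^ ((1 - α) * (2 / 5))) := by
            rw [e2, ← e1]
            ring
        _ ≤ ε * (k : ℝ) ^ (-α) * ((5 / 2 * (ε * Λ 1) * t) ^ ((2 : ℝ) / 5)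
            * ((k - 1 : ℕ) : ℝ) ^ ((1 - α) * (2 / 5))) := by
            apply mul_le_mul_of_nonneg_left _ (mul_nonneg hε.le (Real.rpow_nonneg (Nat.cast_nonneg k) _))
            exact mul_le_mul_of_nonneg_left h9 (Real.rpow_nonneg hA0.le _)
    exact le_trans h10 h8
  -- conclude
  have hp : (0 : ℝ) < (1 - α) * (2 / 5) - α := by nlinarith
  have hC0 : (0 : ℝ) < ε * (5 / 2 * (ε * Λ 1) * t) ^ ((2 : ℝ) / 5)
      / (2 : ℝ) ^ ((1 - α) * (2 / 5)) :=
    div_pos (mul_pos hε (Real.rpow_pos_of_pos hA0 _)) (Real.rpow_pos_of_pos two_pos _)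
  have htend : Tendsto (fun k : ℕ =>
      ε * (5 / 2 * (ε * Λ 1) * t) ^ ((2 : ℝ) / 5) / (2 : ℝ) ^ ((1 - α) * (2 / 5))
        * (k : ℝ) ^ ((1 - α) * (2 / 5) - α)) atTop atTop := by
    apply Tendsto.const_mul_atTop hC0
    exact (tendsto_rpow_atTop hp).comp tendsto_natCast_atTop_atTop
  apply tendsto_atTop_mono' atTop ?_ htend
  filter_upwards [eventually_ge_atTop 2] with k hk2
  exact key k hk2
end
end

section
/- Let t > 0, let m >= 2 be an integer, and let L >= zeta_eta > 0. Let b_j, beta_j : [0,t] -> [0,infty), j = 1, ..., m-1, be continuous functions, and let 0 < c <= C be constants such that c beta_j(s) <= b_j(s) <= C beta_j(s) for all s in [0,t] and all j. Define B_j(s) := Integral_0^s b_j(sigma) d sigma and, for j = 1, ..., m, the cone variables zeta_j(s) := L exp( -3 Sum_{k=1}^{j-1} B_k(s) ) (so zeta_1 is identically L, and each zeta_j is nonincreasing in s). Assume the productive-window monotonicity: for every j in {1, ..., m-1}, if zeta_j(t) >= zeta_eta then beta_j is nondecreasing on [0,t]. If zeta_m(t) < zeta_eta, then Sum_{j=1}^{m-1}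 b_j(t) >= (c/(3 C t)) log(L/zeta_eta). -/
noncomputable section

open Real Set Finset MeasureTheory intervalIntegral

/-- ODE-level front migration.  Let `t > 0`, `m ≥ 2`, `L ≥ ζ_η > 0`.
Let `b_j, β_j : [0,t] → [0,∞)`, `j = 1, …, m-1`, be continuous and comparable:
`c β_j ≤ b_j ≤ C β_j` with `0 < c ≤ C`.  Set `B_j(s) = ∫_0^s b_j` and
`ζ_j(s) = L exp(-3 Σ_{k=1}^{j-1} B_k(s))`.  Assume the productive-window monotonicity:
for `1 ≤ j ≤ m-1`, if `ζ_j(t) ≥ ζ_η` then `β_j` is nondecreasing on `[0,t]`.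
If `ζ_m(t) < ζ_η`, then `Σ_{j=1}^{m-1} b_j(t) ≥ (c/(3Ct)) log(L/ζ_η)`. -/
theorem front_migration_lower_bound (t : ℝ) (ht : 0 < t) (m : ℕ) (hm : 2 ≤ m)
    (L ζη : ℝ) (hζη : 0 < ζη) (hLζ : ζη ≤ L)
    (b β : ℕ → ℝ → ℝ) (c C : ℝ) (hc : 0 < c) (hcC : c ≤ C)
    (hcont : ∀ j ∈ Finset.Icc 1 (m - 1), ContinuousOn (b j) (Icc 0 t) ∧
      ContinuousOn (β j) (Icc 0 t))
    (hnn : ∀ j ∈ Finset.Icc 1 (m - 1), ∀ s ∈ Icc (0 : ℝ) t, 0 ≤ b j s ∧ 0 ≤ β j s)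
    (hcomp : ∀ j ∈ Finset.Icc 1 (m - 1), ∀ s ∈ Icc (0 : ℝ) t,
      c * β j s ≤ b j s ∧ b j s ≤ C * β j s) :
    let B : ℕ → ℝ → ℝ := fun j s => ∫ σ in (0 : ℝ)..s, b j σ
    let ζ : ℕ → ℝ → ℝ := fun j s =>
      L * Real.exp (-3 * ∑ k ∈ Finset.Icc 1 (j - 1), B k s)
    (∀ j ∈ Finset.Icc 1 (m - 1), ζη ≤ ζ j t → MonotoneOn (β j) (Icc 0 t)) →
    ζ m t < ζη →
    (c / (3 * C * t)) * Real.log (L / ζη) ≤ ∑ j ∈ Finset.Icc 1 (m - 1), b j t := by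
  intro B ζ hmono hζm
  have hL : 0 < L := lt_of_lt_of_le hζη hLζ
  have hC : 0 < C := lt_of_lt_of_le hc hcC
  have htmem : t ∈ Icc (0 : ℝ) t := ⟨ht.le, le_rfl⟩
  have hInt : ∀ j ∈ Finset.Icc 1 (m - 1), IntervalIntegrable (b j) volume 0 t := by
    intro j hj
    have h := (hcont j hj).1
    rw [← Set.uIcc_of_le ht.le] at h
    exact h.intervalIntegrable
  have hBnn : ∀ j ∈ Finset.Icc 1 (m - 1), 0 ≤ B j t := by
    intro j hj
    exact intervalIntegral.integral_nonneg ht.le (fun s hs => (hnn j hj s hs).1)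
  -- existence of a first index where the cone variable drops below ζη
  have hPex : ∃ n, ζ (n + 2) t < ζη := ⟨m - 2, by
    have h2 : m - 2 + 2 = m := by omega
    rw [h2]; exact hζm⟩
  set n0 := Nat.find hPex with hn0
  have hspec : ζ (n0 + 2) t < ζη := Nat.find_spec hPex
  have hn0le : n0 ≤ m - 2 := Nat.find_le (by
    have h2 : m - 2 + 2 = m := by omega
    rw [h2]; exact hζm)
  set p := n0 + 1 with hp
  have hpm : p ≤ m - 1 := by omega
  -- ζ j t ≥ ζη for 1 ≤ j ≤ p
  have claimA : ∀ j, 1 ≤ j → j ≤ p → ζη ≤ ζ j t := by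
    intro j hj1 hjp
    rcases Nat.lt_or_ge j 2 with hj2 | hj2
    · have hj : j = 1 := by omega
      subst hj
      have : ζ 1 t = L := by
        simp [ζ, B]
      rw [this]; exact hLζ
    · have hk : j - 2 < n0 := by omega
      have := Nat.find_min hPex hk
      have h2 : j - 2 + 2 = j := by omega
      rw [h2] at this
      exact le_of_not_gt this
  -- key pointwise-to-integral bound on productive indices
  have hkey : ∀ j ∈ Finset.Icc 1 p, c * B j t ≤ C * t * b j t := by
    intro j hj
    have hj' : j ∈ Finset.Icc 1 (m - 1) := by
      rw [Finset.mem_Icc] at hj ⊢; omega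
    have hjA : ζη ≤ ζ j t := claimA j (Finset.mem_Icc.mp hj).1 (Finset.mem_Icc.mp hj).2
    have hmonoj : MonotoneOn (β j) (Icc 0 t) := hmono j hj' hjA
    have hbt : 0 ≤ b j t := (hnn j hj' t htmem).1
    set M : ℝ := C / c * b j t with hM
    have hptw : ∀ s ∈ Icc (0 : ℝ) t, b j s ≤ M := by
      intro s hs
      have h1 : b j s ≤ C * β j s := (hcomp j hj' s hs).2
      have h2 : β j s ≤ β j t := hmonoj hs htmem hs.2
      have h3 : c * β j t ≤ b j t := (hcomp j hj' t htmem).1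
      have h4 : C * β j s ≤ C * β j t := by nlinarith
      have h5 : C * β j t ≤ M := by
        rw [hM]
        rw [div_mul_eq_mul_div, le_div_iff₀ hc]
        nlinarith
      linarith
    have hBle : B j t ≤ t * M := by
      have h0 := intervalIntegral.integral_mono_on ht.le (hInt j hj')
        (intervalIntegrable_const) hptw
      rw [intervalIntegral.integral_const, smul_eq_mul, sub_zero] at h0
      exact h0
    have hcM : c * M = C * b j t := by
      rw [hM]; field_simp [hc.ne']
    nlinarith [mul_le_mul_of_nonneg_left hBle hc.le]
  -- the cascade drop gives a lower bound on the accumulated sum of B's over [1,p]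
  have hdrop : Real.log (L / ζη) < 3 * ∑ k ∈ Finset.Icc 1 p, B k t := by
    have hz : ζ (p + 1) t < ζη := by
      have : p + 1 = n0 + 2 := by omega
      rw [this]; exact hspec
    have h1 : p + 1 - 1 = p := by omega
    have hz' : L * Real.exp (-3 * ∑ k ∈ Finset.Icc 1 p, B k t) < ζη := by
      have := hz
      simp only [ζ, h1] at this
      exact this
    set S := ∑ k ∈ Finset.Icc 1 p, B k t with hS
    have hexp : Real.exp (-3 * S) < ζη / L := by
      rw [lt_div_iff₀ hL] at *
      linarith [hz']
    have hlog : -3 * S < Real.log (ζη / L) := by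
      calc -3 * S = Real.log (Real.exp (-3 * S)) := (Real.log_exp _).symm
        _ < Real.log (ζη / L) := Real.log_lt_log (Real.exp_pos _) hexp
    have h2 : Real.log (ζη / L) = -(Real.log (L / ζη)) := by
      rw [Real.log_div hζη.ne' hL.ne', Real.log_div hL.ne' hζη.ne']
      ring
    rw [h2] at hlog
    linarith
  -- summing the key bound
  have hsum : c * ∑ k ∈ Finset.Icc 1 p, B k t ≤
      C * t * ∑ k ∈ Finset.Icc 1 p, b k t := by
    rw [Finset.mul_sum, Finset.mul_sum]
    exact Finset.sum_le_sum hkey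
  have hsub : ∑ k ∈ Finset.Icc 1 p, b k t ≤ ∑ k ∈ Finset.Icc 1 (m - 1), b k t := by
    apply Finset.sum_le_sum_of_subset_of_nonneg
      (Finset.Icc_subset_Icc le_rfl hpm)
    intro i hi _
    exact (hnn i hi t htmem).1
  have hCt : 0 < 3 * C * t := by positivity
  rw [div_mul_eq_mul_div, div_le_iff₀ hCt]
  nlinarith [mul_le_mul_of_nonneg_left hsub (by positivity : (0:ℝ) ≤ C * t)]
end
end
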